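/- arXiv:2405.14360 — 6 statements merged into one kernel-verified Lean document; each statement's English description precedes it below -/
import Mathlib

section
/- Assume b1 > d1, b2 > d2 and γ^F > 0. Let θ^F be the unique real in (0, K1^F(1 − d1/b1)) with F^F(θ^F) = F^F(−K2^F(1 − d2/b2)). Then for every α ∈ (θ^F, K1^F(1 − d1/b1)) there exists a function χ_α^{0,F} : ℝ → ℝ which is even, nonincreasing on (0,∞), satisfies −(χ_α^{0,F})'' = f^F(χ_α^{0,F}) on (−L_α^F, L_α^F), χ_α^{0,F}(0) = α, χ_α^{0,F}(±L_α^F) = −max(K2^U, K2^F)(1 − d2/b2), and χ_α^{0,F}(x) = −max(K2^F, K2^U)(1 − d2/b2) for all x ∉ (−L_α^F, L_α^F), where L_α^F = ∫ from −max(K2^F,K2^U)(1−d2/b2) to α of dz/√(2(F^F(α) − F^F(z))). -/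
open Set MeasureTheory Filter Topology

/-- The bistable reaction term `f(ω) = b1 ω₊ (1-ω₊/K1) - d1 ω₊ - b2 ω₋ (1-ω₋/K2) + d2 ω₋`. -/
noncomputable def reactionTerm (b1 d1 b2 d2 K1 K2 : ℝ) (w : ℝ) : ℝ :=
  b1 * max w 0 * (1 - max w 0 / K1) - d1 * max w 0
    - b2 * max (-w) 0 * (1 - max (-w) 0 / K2) + d2 * max (-w) 0

/-- The antiderivative of the reaction term, normalized to vanish at `0`. -/
noncomputable def reactionPotential (b1 d1 b2 d2 K1 K2 : ℝ) (w : ℝ) : ℝ :=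
  ∫ z in (0:ℝ)..w, reactionTerm b1 d1 b2 d2 K1 K2 z

lemma rt_cont (b1 d1 b2 d2 K1 K2 : ℝ) : Continuous (reactionTerm b1 d1 b2 d2 K1 K2) := by
  unfold reactionTerm
  fun_prop

lemma rt_hasDeriv (b1 d1 b2 d2 K1 K2 : ℝ) (w : ℝ) :
    HasDerivAt (reactionPotential b1 d1 b2 d2 K1 K2) (reactionTerm b1 d1 b2 d2 K1 K2 w) w := by
  have hc := rt_cont b1 d1 b2 d2 K1 K2
  exact intervalIntegral.integral_hasDerivAt_right (hc.intervalIntegrable 0 w)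
    hc.stronglyMeasurable.stronglyMeasurableAtFilter hc.continuousAt

lemma rt_pos_of_mem {b1 d1 b2 d2 K1 K2 w : ℝ} (hb1 : 0 < b1) (hK1 : 0 < K1)
    (hw : 0 < w) (hw2 : w < K1 * (1 - d1 / b1)) :
    0 < reactionTerm b1 d1 b2 d2 K1 K2 w := by
  have h0 : max w 0 = w := max_eq_left hw.le
  have h1 : max (-w) 0 = 0 := max_eq_right (by linarith)
  have h2 : w / K1 < 1 - d1 / b1 := (div_lt_iff₀ hK1).mpr (by linarith)
  have h3 : d1 < b1 * (1 - w / K1) := by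
    have h4 : d1 / b1 < 1 - w / K1 := by linarith
    have := (div_lt_iff₀ hb1).mp h4
    linarith [this]
  unfold reactionTerm
  rw [h0, h1]
  nlinarith [mul_pos hw (show (0:ℝ) < b1 * (1 - w / K1) - d1 by linarith)]

lemma rt_neg_of_mem {b1 d1 b2 d2 K1 K2 w : ℝ} (hb2 : 0 < b2) (hK2 : 0 < K2)
    (hw : w < 0) (hw2 : -(K2 * (1 - d2 / b2)) < w) :
    reactionTerm b1 d1 b2 d2 K1 K2 w < 0 := by
  have h0 : max w 0 = 0 := max_eq_right hw.le
  have h1 : max (-w) 0 = -w := max_eq_left (by linarith)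
  have h2 : -w < K2 * (1 - d2 / b2) := by linarith
  have h3 : (-w) / K2 < 1 - d2 / b2 := (div_lt_iff₀ hK2).mpr (by linarith)
  have h4 : d2 < b2 * (1 - (-w) / K2) := by
    have h5 : d2 / b2 < 1 - (-w) / K2 := by linarith
    have := (div_lt_iff₀ hb2).mp h5
    linarith
  unfold reactionTerm
  rw [h0, h1]
  nlinarith [mul_pos (show (0:ℝ) < -w by linarith)
    (show (0:ℝ) < b2 * (1 - (-w) / K2) - d2 by linarith)]

lemma rt_pos_of_lt {b1 d1 b2 d2 K1 K2 w : ℝ} (hb2 : 0 < b2) (hK2 : 0 < K2)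
    (hd2 : 0 < d2) (hbd2 : d2 < b2) (hw2 : w < -(K2 * (1 - d2 / b2))) :
    0 < reactionTerm b1 d1 b2 d2 K1 K2 w := by
  have hm2 : 0 < K2 * (1 - d2 / b2) := by
    have : d2 / b2 < 1 := (div_lt_one hb2).mpr hbd2
    have h1 : 0 < 1 - d2 / b2 := by linarith
    positivity
  have hw : w < 0 := by linarith
  have h0 : max w 0 = 0 := max_eq_right hw.le
  have h1 : max (-w) 0 = -w := max_eq_left (by linarith)
  have h2 : K2 * (1 - d2 / b2) < -w := by linarith
  have h3 : 1 - d2 / b2 < (-w) / K2 := (lt_div_iff₀ hK2).mpr (by linarith)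
  have h4 : b2 * (1 - (-w) / K2) < d2 := by
    have h5 : 1 - (-w) / K2 < d2 / b2 := by linarith
    have := (lt_div_iff₀ hb2).mp h5
    linarith
  unfold reactionTerm
  rw [h0, h1]
  nlinarith [mul_pos (show (0:ℝ) < -w by linarith)
    (show (0:ℝ) < d2 - b2 * (1 - (-w) / K2) by linarith)]

set_option maxHeartbeats 2000000 in
/-- existence of the critical bubbles `χ_α^{0,F}` of `f^F` (Lemma lem:bubbleF). -/
theorem stmt7 (b1 b2 d1 d2 K1F K1U K2F K2U : ℝ)
    (hb1 : 0 < b1) (hb2 : 0 < b2) (hd1 : 0 < d1) (hd2 : 0 < d2)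
    (hK1F : 0 < K1F) (hK1U : 0 < K1U) (hK2F : 0 < K2F) (hK2U : 0 < K2U)
    (hbd1 : d1 < b1) (hbd2 : d2 < b2)
    -- γ^F > 0
    (hγF : 0 < reactionPotential b1 d1 b2 d2 K1F K2F (K1F * (1 - d1 / b1))
            - reactionPotential b1 d1 b2 d2 K1F K2F (-(K2F * (1 - d2 / b2))))
    -- θ^F : the unique real in (0, K1^F(1 - d1/b1)) with F^F(θ^F) = F^F(-K2^F(1 - d2/b2))
    (θF : ℝ) (hθmem : θF ∈ Set.Ioo 0 (K1F * (1 - d1 / b1)))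
    (hθval : reactionPotential b1 d1 b2 d2 K1F K2F θF
      = reactionPotential b1 d1 b2 d2 K1F K2F (-(K2F * (1 - d2 / b2)))) :
    ∀ α ∈ Set.Ioo θF (K1F * (1 - d1 / b1)), ∀ L : ℝ,
      L = ∫ z in (-(max K2F K2U * (1 - d2 / b2)))..α,
            1 / Real.sqrt (2 * (reactionPotential b1 d1 b2 d2 K1F K2F α
                - reactionPotential b1 d1 b2 d2 K1F K2F z)) →
      ∃ χ : ℝ → ℝ,
        (∀ x, χ (-x) = χ x) ∧
        AntitoneOn χ (Set.Ioi 0) ∧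
        (∀ x ∈ Set.Ioo (-L) L, DifferentiableAt ℝ χ x) ∧
        (∀ x ∈ Set.Ioo (-L) L,
          HasDerivAt (deriv χ) (-(reactionTerm b1 d1 b2 d2 K1F K2F (χ x))) x) ∧
        χ 0 = α ∧
        χ L = -(max K2F K2U * (1 - d2 / b2)) ∧
        χ (-L) = -(max K2F K2U * (1 - d2 / b2)) ∧
        (∀ x, x ∉ Set.Ioo (-L) L → χ x = -(max K2F K2U * (1 - d2 / b2))) := by
  intro α hα L hL
  set M := max K2F K2U * (1 - d2 / b2) with hMdef
  set m2 := K2F * (1 - d2 / b2) with hm2def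
  set β := K1F * (1 - d1 / b1) with hβdef
  set F := reactionPotential b1 d1 b2 d2 K1F K2F with hFdef
  set f := reactionTerm b1 d1 b2 d2 K1F K2F with hfdef
  have h1m2 : 0 < 1 - d2 / b2 := by
    have : d2 / b2 < 1 := (div_lt_one hb2).mpr hbd2
    linarith
  have h1m1 : 0 < 1 - d1 / b1 := by
    have : d1 / b1 < 1 := (div_lt_one hb1).mpr hbd1
    linarith
  have hm2 : 0 < m2 := by rw [hm2def]; positivity
  have hK2M : K2F ≤ max K2F K2U := le_max_left _ _
  have hM : 0 < M := by rw [hMdef]; positivity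
  have hm2M : m2 ≤ M := by
    rw [hm2def, hMdef]; exact mul_le_mul_of_nonneg_right hK2M h1m2.le
  have hβ : 0 < β := by rw [hβdef]; positivity
  have hθ0 : 0 < θF := hθmem.1
  have hθβ : θF < β := hθmem.2
  have hθα : θF < α := hα.1
  have hα0 : 0 < α := hθ0.trans hθα
  have hαβ : α < β := hα.2
  have hMα : -M < α := by linarith
  -- basic facts on f and F
  have hfc : Continuous f := rt_cont b1 d1 b2 d2 K1F K2F
  have hFd : ∀ w, HasDerivAt F (f w) w := rt_hasDeriv b1 d1 b2 d2 K1F K2F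
  have hFdiff : Differentiable ℝ F := fun w => (hFd w).differentiableAt
  have hFc : Continuous F := hFdiff.continuous
  have hderivF : deriv F = f := funext fun w => (hFd w).deriv
  have hfpos : ∀ w ∈ Ioo (0:ℝ) β, 0 < f w := fun w hw =>
    rt_pos_of_mem hb1 hK1F hw.1 hw.2
  have hfneg : ∀ w ∈ Ioo (-m2) (0:ℝ), f w < 0 := fun w hw =>
    rt_neg_of_mem hb2 hK2F hw.2 hw.1
  have hfpos' : ∀ w : ℝ, w < -m2 → 0 < f w := fun w hw =>
    rt_pos_of_lt hb2 hK2F hd2 hbd2 hw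
  -- monotonicity of F
  have hmono1 : StrictMonoOn F (Icc 0 β) := by
    apply strictMonoOn_of_deriv_pos (convex_Icc (0:ℝ) β) hFc.continuousOn
    intro x hx
    rw [interior_Icc] at hx
    rw [hderivF]
    exact hfpos x hx
  have hanti : AntitoneOn F (Icc (-m2) 0) := by
    apply antitoneOn_of_deriv_nonpos (convex_Icc (-m2) (0:ℝ)) hFc.continuousOn
      hFdiff.differentiableOn
    intro x hx
    rw [interior_Icc] at hx
    rw [hderivF]
    exact (hfneg x hx).le
  have hmono2 : StrictMonoOn F (Icc (-M) (-m2)) := by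
    apply strictMonoOn_of_deriv_pos (convex_Icc (-M) (-m2)) hFc.continuousOn
    intro x hx
    rw [interior_Icc] at hx
    rw [hderivF]
    exact hfpos' x hx.2
  have hFθα : F θF < F α :=
    hmono1 ⟨hθ0.le, hθβ.le⟩ ⟨hα0.le, hαβ.le⟩ hθα
  have hFm2 : F (-m2) = F θF := hθval.symm
  have Fkey : ∀ z ∈ Ico (-M) α, F z < F α := by
    intro z hz
    rcases le_or_gt 0 z with h0 | h0
    · exact hmono1 ⟨h0, (hz.2.trans hαβ).le⟩ ⟨hα0.le, hαβ.le⟩ hz.2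
    · rcases le_or_gt (-m2) z with h1 | h1
      · have h2 : F z ≤ F (-m2) := hanti ⟨le_refl _, by linarith⟩ ⟨h1, h0.le⟩ h1
        rw [hFm2] at h2; linarith
      · have h2 : F z < F (-m2) := hmono2 ⟨hz.1, h1.le⟩ ⟨by linarith, le_refl _⟩ h1
        rw [hFm2] at h2; linarith
  have hfα : 0 < f α := hfpos α ⟨hα0, hαβ⟩
  -- integrand
  set φ : ℝ → ℝ := fun z => 1 / Real.sqrt (2 * (F α - F z)) with hφdef
  set gg : ℝ → ℝ := fun w => Real.sqrt (2 * (F α - F w)) with hggdef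
  have hφgg : ∀ z, φ z = 1 / gg z := fun z => rfl
  have hggc : Continuous gg := Real.continuous_sqrt.comp
    (continuous_const.mul (continuous_const.sub hFc))
  have hgg_pos : ∀ z ∈ Ico (-M) α, 0 < gg z := by
    intro z hz
    exact Real.sqrt_pos.mpr (by linarith [Fkey z hz])
  have hφ_pos : ∀ z ∈ Ico (-M) α, 0 < φ z := by
    intro z hz
    rw [hφgg]
    exact div_pos one_pos (hgg_pos z hz)
  have hφ_cont : ∀ z : ℝ, F z < F α → ContinuousAt φ z := by
    intro z hz
    exact continuousAt_const.div hggc.continuousAt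
      (ne_of_gt (Real.sqrt_pos.mpr (by linarith)))
  have hφ_meas : Measurable φ := by
    have h := hggc.measurable.inv
    rw [hggdef] at h
    simp only [hφdef, one_div]
    exact h
  have hLint : L = ∫ z in (-M)..α, φ z := hL
  -- integrability of φ on [-M, α]
  have hint : IntervalIntegrable φ volume (-M) α := by
    obtain ⟨δ0, hδ00, hδ0⟩ := Metric.continuousAt_iff.mp hfc.continuousAt (f α / 2)
      (by positivity)
    set δ := min (δ0 / 2) ((α + M) / 2) with hδdef
    have hαM2 : 0 < (α + M) / 2 := by linarith
    have hδpos : 0 < δ := lt_min (half_pos hδ00) hαM2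
    have hδle : δ ≤ (α + M) / 2 := min_le_right _ _
    have hδle0 : δ ≤ δ0 / 2 := min_le_left _ _
    have hMδ : -M < α - δ := by linarith
    have hδα : α - δ < α := by linarith
    have hfl : ∀ w ∈ Icc (α - δ) α, f α / 2 ≤ f w := by
      intro w hw
      have h1 : dist w α < δ0 := by
        rw [Real.dist_eq]
        have : |w - α| ≤ δ := abs_le.mpr ⟨by linarith [hw.1], by linarith [hw.2]⟩
        linarith
      have h2 := hδ0 h1
      rw [Real.dist_eq] at h2
      have := abs_lt.mp h2
      linarith [this.1]
    have hFlow : ∀ w ∈ Icc (α - δ) α, f α / 2 * (α - w) ≤ F α - F w := by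
      intro w hw
      have := (convex_Icc (α - δ) α).mul_sub_le_image_sub_of_le_deriv hFc.continuousOn
        hFdiff.differentiableOn (fun x hx => by
          rw [interior_Icc] at hx
          rw [hderivF]
          exact hfl x ⟨hx.1.le, hx.2.le⟩) w hw α ⟨by linarith, le_refl _⟩ hw.2
      linarith
    have hint1 : IntervalIntegrable φ volume (-M) (α - δ) := by
      apply ContinuousOn.intervalIntegrable
      intro z hz
      rw [uIcc_of_le (by linarith : -M ≤ α - δ)] at hz
      exact (hφ_cont z (Fkey z ⟨hz.1, by linarith [hz.2]⟩)).continuousWithinAt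
    have hint2 : IntervalIntegrable φ volume (α - δ) α := by
      have h1 : IntervalIntegrable (fun x : ℝ => x ^ (-(1/2) : ℝ)) volume 0 δ :=
        intervalIntegral.intervalIntegrable_rpow' (by norm_num)
      have h2 := (h1.comp_sub_left α).symm
      have hb2 : IntervalIntegrable (fun z => (Real.sqrt (f α))⁻¹ * (α - z) ^ (-(1/2) : ℝ))
          volume (α - δ) α := by
        have := h2.const_mul (Real.sqrt (f α))⁻¹
        simpa using this
      apply IntervalIntegrable.mono_fun' hb2 hφ_meas.aestronglyMeasurable.restrict
      rw [uIoc_of_le hδα.le]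
      filter_upwards [ae_restrict_mem measurableSet_Ioc] with z hz
      rcases eq_or_lt_of_le hz.2 with hz2 | hz2
      · have hz3 : φ z = 0 := by
          rw [hφdef]
          simp [hz2]
        rw [hz3, hz2]
        simp [Real.zero_rpow (show (-(1/2) : ℝ) ≠ 0 by norm_num)]
      · have hzmem : z ∈ Ico (-M) α := ⟨by linarith [hz.1], hz2⟩
        have hggz := hgg_pos z hzmem
        have hsub : 0 ≤ α - z := by linarith
        have hkey : Real.sqrt (f α) * Real.sqrt (α - z) ≤ gg z := by
          rw [hggdef]
          rw [← Real.sqrt_mul hfα.le]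
          apply Real.sqrt_le_sqrt
          have := hFlow z ⟨(le_of_lt hz.1), hz.2⟩
          nlinarith
        have hφz : ‖φ z‖ = (gg z)⁻¹ := by
          rw [hφgg, one_div, Real.norm_eq_abs, abs_of_pos (inv_pos.mpr hggz)]
        rw [hφz]
        have hrw : (α - z) ^ (-(1/2) : ℝ) = (Real.sqrt (α - z))⁻¹ := by
          rw [Real.rpow_neg hsub, Real.sqrt_eq_rpow]
        rw [hrw, ← mul_inv]
        apply inv_anti₀
          (mul_pos (Real.sqrt_pos.mpr hfα) (Real.sqrt_pos.mpr (by linarith : (0:ℝ) < α - z)))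
          hkey
    exact hint1.trans hint2
  have hL0 : 0 < L := by
    rw [hLint]
    exact intervalIntegral.intervalIntegral_pos_of_pos_on hint
      (fun z hz => hφ_pos z ⟨hz.1.le, hz.2⟩) hMα
  -- the primitive H
  set H : ℝ → ℝ := fun w => ∫ z in (-M)..w, φ z with hHdef
  have hH0 : H (-M) = 0 := intervalIntegral.integral_same
  have hHα : H α = L := hLint.symm
  have hsubint : ∀ w1 ∈ Icc (-M) α, ∀ w2 ∈ Icc (-M) α,
      IntervalIntegrable φ volume w1 w2 := by
    intro w1 h1 w2 h2
    apply hint.mono_set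
    rw [uIcc_of_le hMα.le]
    exact uIcc_subset_Icc h1 h2
  have hHmono : StrictMonoOn H (Icc (-M) α) := by
    intro w1 h1 w2 h2 hlt
    have e1 : IntervalIntegrable φ volume (-M) w1 :=
      hsubint (-M) ⟨le_refl _, hMα.le⟩ w1 h1
    have e2 : IntervalIntegrable φ volume w1 w2 := hsubint w1 h1 w2 h2
    have hdiff : H w2 - H w1 = ∫ z in w1..w2, φ z := by
      rw [hHdef]
      simp only
      rw [← intervalIntegral.integral_add_adjacent_intervals e1 e2]
      ring
    have hpos : 0 < ∫ z in w1..w2, φ z := by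
      apply intervalIntegral.intervalIntegral_pos_of_pos_on e2
      · intro z hz
        exact hφ_pos z ⟨le_trans h1.1 hz.1.le, lt_of_lt_of_le hz.2 h2.2⟩
      · exact hlt
    linarith
  have hHcont : ContinuousOn H (Icc (-M) α) := by
    have h := intervalIntegral.continuousOn_primitive_interval' hint left_mem_uIcc
    rwa [uIcc_of_le hMα.le] at h
  have hsurj : ∀ y ∈ Icc (0:ℝ) L, ∃ w ∈ Icc (-M) α, H w = y := by
    intro y hy
    have h := intermediate_value_Icc hMα.le hHcont
    rw [hH0, hHα] at h
    obtain ⟨w, hw, hwy⟩ := h hy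
    exact ⟨w, hw, hwy⟩
  set Hinv : ℝ → ℝ := Function.invFunOn H (Icc (-M) α) with hHinvdef
  have hinj : InjOn H (Icc (-M) α) := hHmono.injOn
  have hHinv1 : ∀ y ∈ Icc (0:ℝ) L, Hinv y ∈ Icc (-M) α ∧ H (Hinv y) = y := fun y hy =>
    ⟨Function.invFunOn_mem (hsurj y hy), Function.invFunOn_eq (hsurj y hy)⟩
  have hHinvH : ∀ w ∈ Icc (-M) α, Hinv (H w) = w := fun w hw =>
    hinj.leftInvOn_invFunOn hw
  have hHinvmono : ∀ y1 ∈ Icc (0:ℝ) L, ∀ y2 ∈ Icc (0:ℝ) L, y1 ≤ y2 → Hinv y1 ≤ Hinv y2 := by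
    intro y1 h1 y2 h2 h12
    by_contra hcon
    push_neg at hcon
    have h := hHmono (hHinv1 y2 h2).1 (hHinv1 y1 h1).1 hcon
    rw [(hHinv1 y1 h1).2, (hHinv1 y2 h2).2] at h
    linarith
  have hHinv0 : Hinv 0 = -M := by
    rw [← hH0]
    exact hHinvH (-M) ⟨le_refl _, hMα.le⟩
  have hHinvL : Hinv L = α := by
    rw [← hHα]
    exact hHinvH α ⟨hMα.le, le_refl _⟩
  have hHinvlt : ∀ y ∈ Ico (0:ℝ) L, Hinv y < α := by
    intro y hy
    have h1 := (hHinv1 y ⟨hy.1, hy.2.le⟩).1.2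
    rcases eq_or_lt_of_le h1 with h2 | h2
    · exfalso
      have := (hHinv1 y ⟨hy.1, hy.2.le⟩).2
      rw [h2, hHα] at this
      linarith [hy.2]
    · exact h2
  have hHinvgt : ∀ y ∈ Ioc (0:ℝ) L, -M < Hinv y := by
    intro y hy
    have h1 := (hHinv1 y ⟨hy.1.le, hy.2⟩).1.1
    rcases eq_or_lt_of_le h1 with h2 | h2
    · exfalso
      have := (hHinv1 y ⟨hy.1.le, hy.2⟩).2
      rw [← h2, hH0] at this
      linarith [hy.1]
    · exact h2
  -- extended inverse G, monotone and surjective, hence continuous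
  set G : ℝ → ℝ := fun y => if y < 0 then -M + y else if y ≤ L then Hinv y else α + (y - L)
    with hGdef
  have hGeq : ∀ y ∈ Icc (0:ℝ) L, G y = Hinv y := by
    intro y hy
    rw [hGdef]
    simp only
    rw [if_neg (not_lt.mpr hy.1), if_pos hy.2]
  have hL0' : 0 < L := hL0
  have hGmono : Monotone G := by
    intro y1 y2 h
    rw [hGdef]
    simp only
    by_cases h1 : y1 < 0
    · rw [if_pos h1]
      by_cases h2 : y2 < 0
      · rw [if_pos h2]; linarith
      · push_neg at h2
        rw [if_neg (not_lt.mpr h2)]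
        by_cases h3 : y2 ≤ L
        · rw [if_pos h3]
          have := (hHinv1 y2 ⟨h2, h3⟩).1.1
          linarith
        · rw [if_neg h3]
          push_neg at h3
          linarith
    · push_neg at h1
      have h2 : ¬ y2 < 0 := by push_neg; linarith
      rw [if_neg (not_lt.mpr h1), if_neg h2]
      by_cases h3 : y1 ≤ L
      · rw [if_pos h3]
        by_cases h4 : y2 ≤ L
        · rw [if_pos h4]
          exact hHinvmono y1 ⟨h1, h3⟩ y2 ⟨by linarith, h4⟩ h
        · rw [if_neg h4]
          push_neg at h4
          have := (hHinv1 y1 ⟨h1, h3⟩).1.2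
          linarith
      · push_neg at h3
        have h4 : ¬ y2 ≤ L := by push_neg; linarith
        rw [if_neg (not_le.mpr h3), if_neg h4]
        linarith
  have hGsurj : Function.Surjective G := by
    intro v
    rcases lt_or_ge v (-M) with h | h
    · refine ⟨v + M, ?_⟩
      rw [hGdef]
      simp only [if_pos (show v + M < 0 by linarith)]
      ring
    · rcases le_or_gt v α with h2 | h2
      · have hv : v ∈ Icc (-M) α := ⟨h, h2⟩
        have hHv : H v ∈ Icc (0:ℝ) L := by
          constructor
          · rw [← hH0]
            exact hHmono.monotoneOn ⟨le_refl _, hMα.le⟩ hv hv.1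
          · rw [← hHα]
            exact hHmono.monotoneOn hv ⟨hMα.le, le_refl _⟩ hv.2
        refine ⟨H v, ?_⟩
        rw [hGeq (H v) hHv]
        exact hHinvH v hv
      · refine ⟨L + (v - α), ?_⟩
        rw [hGdef]
        simp only [if_neg (show ¬ (L + (v - α) < 0) by push_neg; linarith),
          if_neg (show ¬ (L + (v - α) ≤ L) by push_neg; linarith)]
        ring
  have hGcont : Continuous G := hGmono.continuous_of_surjective hGsurj
  -- the bubble χ
  set χ : ℝ → ℝ := fun x => G (max (L - |x|) 0) with hχdef
  have hclamp : ∀ x : ℝ, max (L - |x|) 0 ∈ Icc (0:ℝ) L := by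
    intro x
    constructor
    · exact le_max_right _ _
    · apply max_le _ hL0.le
      have := abs_nonneg x
      linarith
  have hχHinv : ∀ x, χ x = Hinv (max (L - |x|) 0) := by
    intro x
    rw [hχdef]
    exact hGeq _ (hclamp x)
  have hχcont : Continuous χ :=
    hGcont.comp ((continuous_const.sub continuous_abs).max continuous_const)
  have hχeven : ∀ x, χ (-x) = χ x := by
    intro x
    rw [hχdef]
    simp [abs_neg]
  have hχ0 : χ 0 = α := by
    rw [hχHinv]
    simp only [abs_zero, sub_zero]
    rw [max_eq_left hL0.le, hHinvL]
  have hχL : χ L = -M := by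
    rw [hχHinv]
    rw [abs_of_nonneg hL0.le]
    simp only [sub_self]
    rw [max_eq_right (le_refl (0:ℝ)), hHinv0]
  have hχmem : ∀ x, χ x ∈ Icc (-M) α := by
    intro x
    rw [hχHinv]
    exact (hHinv1 _ (hclamp x)).1
  have hout : ∀ x, x ∉ Ioo (-L) L → χ x = -M := by
    intro x hx
    have hLx : L ≤ |x| := by
      rcases not_and_or.mp (fun hc : -L < x ∧ x < L => hx ⟨hc.1, hc.2⟩) with h | h
      · push_neg at h
        rw [abs_of_nonpos (by linarith)]
        linarith
      · push_neg at h
        rw [abs_of_nonneg (by linarith)]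
        exact h
    rw [hχHinv]
    rw [max_eq_right (by linarith), hHinv0]
  have hχIcc : ∀ x ∈ Icc (0:ℝ) L, χ x = Hinv (L - x) := by
    intro x hx
    rw [hχHinv]
    congr 1
    rw [abs_of_nonneg hx.1]
    exact max_eq_left (by linarith [hx.2])
  have hχanti : AntitoneOn χ (Ioi (0:ℝ)) := by
    intro x hx y hy hxy
    rw [hχdef]
    simp only
    apply hGmono
    apply max_le_max _ (le_refl _)
    rw [abs_of_nonneg (le_of_lt (show (0:ℝ) < x from hx)), abs_of_nonneg (le_of_lt (show (0:ℝ) < y from lt_of_lt_of_le hx hxy))]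
    linarith
  have hχlt : ∀ x ∈ Ioo (0:ℝ) L, χ x ∈ Ioo (-M) α ∧ H (χ x) = L - x := by
    intro x hx
    have h1 : L - x ∈ Icc (0:ℝ) L := ⟨by linarith [hx.2], by linarith [hx.1]⟩
    rw [hχIcc x ⟨hx.1.le, hx.2.le⟩]
    refine ⟨⟨?_, ?_⟩, (hHinv1 _ h1).2⟩
    · exact hHinvgt _ ⟨by linarith [hx.2], h1.2⟩
    · exact hHinvlt _ ⟨h1.1, by linarith [hx.1]⟩
  -- Claim A : derivative of χ on (0, L)
  have hA : ∀ x ∈ Ioo (0:ℝ) L, HasDerivAt χ (-gg (χ x)) x := by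
    intro x hx
    obtain ⟨hwmem, hHw⟩ := hχlt x hx
    have hFw : F (χ x) < F α := Fkey (χ x) ⟨hwmem.1.le, hwmem.2⟩
    have h2pos : 0 < 2 * (F α - F (χ x)) := by linarith
    have hggw : 0 < gg (χ x) := Real.sqrt_pos.mpr h2pos
    have hφw : 0 < φ (χ x) := hφ_pos (χ x) ⟨hwmem.1.le, hwmem.2⟩
    have hder : HasDerivAt (fun v => L - H v) (-(φ (χ x))) (χ x) := by
      have h1 : HasDerivAt H (φ (χ x)) (χ x) := by
        rw [hHdef]
        exact intervalIntegral.integral_hasDerivAt_right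
          (hsubint (-M) ⟨le_refl _, hMα.le⟩ (χ x) ⟨hwmem.1.le, hwmem.2.le⟩)
          (hφ_meas.stronglyMeasurable.stronglyMeasurableAtFilter)
          (hφ_cont (χ x) hFw)
      exact ((hasDerivAt_const (χ x) L).sub h1).congr_deriv (by ring)
    have hfg : ∀ᶠ y in 𝓝 x, L - H (χ y) = y := by
      filter_upwards [isOpen_Ioo.mem_nhds hx] with y hy
      rw [(hχlt y hy).2]
      ring
    have hinv := HasDerivAt.of_local_left_inverse hχcont.continuousAt hder
      (neg_ne_zero.mpr (ne_of_gt hφw)) hfg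
    have hval : (-(φ (χ x)))⁻¹ = -gg (χ x) := by
      rw [hφgg]
      field_simp
    rwa [hval] at hinv
  -- key quantitative estimate near x = 0
  have key : ∀ ε : ℝ, 0 < ε → ε < f α → ∃ x₀, 0 < x₀ ∧ x₀ < L ∧
      (∀ x ∈ Icc (0:ℝ) x₀, α - χ x ≤ (f α + ε) * x ^ 2 / 2) ∧
      (∀ x ∈ Ioc (0:ℝ) x₀, (f α - ε) * x ≤ gg (χ x) ∧ gg (χ x) ≤ (f α + ε) * x) := by
    intro ε hε hεc
    obtain ⟨δ0, hδ00, hδ0⟩ := Metric.continuousAt_iff.mp hfc.continuousAt ε hε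
    set δ := δ0 / 2 with hδdef
    have hδpos : 0 < δ := half_pos hδ00
    have hfl : ∀ w ∈ Icc (α - δ) α, f α - ε ≤ f w ∧ f w ≤ f α + ε := by
      intro w hw
      have h1 : dist w α < δ0 := by
        rw [Real.dist_eq]
        have : |w - α| ≤ δ := abs_le.mpr ⟨by linarith [hw.1], by linarith [hw.2]⟩
        linarith
      have h2 := hδ0 h1
      rw [Real.dist_eq] at h2
      have h3 := abs_lt.mp h2
      constructor <;> linarith [h3.1, h3.2]
    have hFub : ∀ w ∈ Icc (α - δ) α, F α - F w ≤ (f α + ε) * (α - w) := by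
      intro w hw
      have := (convex_Icc (α - δ) α).image_sub_le_mul_sub_of_deriv_le hFc.continuousOn
        hFdiff.differentiableOn (fun x hx => by
          rw [interior_Icc] at hx
          rw [hderivF]
          exact (hfl x ⟨hx.1.le, hx.2.le⟩).2) w hw α ⟨by linarith, le_refl _⟩ hw.2
      linarith
    have hFlb : ∀ w ∈ Icc (α - δ) α, (f α - ε) * (α - w) ≤ F α - F w := by
      intro w hw
      have := (convex_Icc (α - δ) α).mul_sub_le_image_sub_of_le_deriv hFc.continuousOn
        hFdiff.differentiableOn (fun x hx => by
          rw [interior_Icc] at hx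
          rw [hderivF]
          exact (hfl x ⟨hx.1.le, hx.2.le⟩).1) w hw α ⟨by linarith, le_refl _⟩ hw.2
      linarith
    obtain ⟨η, hη0, hη⟩ := Metric.continuousAt_iff.mp hχcont.continuousAt δ hδpos
    set x₀ := min (η / 2) (L / 2) with hx₀def
    have hx₀0 : 0 < x₀ := lt_min (half_pos hη0) (half_pos hL0)
    have hx₀L : x₀ < L := lt_of_le_of_lt (min_le_right _ _) (by linarith)
    have hx₀η : x₀ < η := lt_of_le_of_lt (min_le_left _ _) (by linarith)
    have hχin : ∀ x ∈ Icc (0:ℝ) x₀, χ x ∈ Icc (α - δ) α := by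
      intro x hx
      constructor
      · have h1 : dist x 0 < η := by
          rw [Real.dist_eq, sub_zero, abs_of_nonneg hx.1]
          linarith [hx.2]
        have h2 := hη h1
        rw [hχ0, Real.dist_eq] at h2
        have := abs_lt.mp h2
        linarith [this.1]
      · exact (hχmem x).2
    set r : ℝ → ℝ := fun x => Real.sqrt (α - χ x) with hrdef
    have hupos : ∀ x ∈ Ioo (0:ℝ) x₀, 0 < α - χ x := by
      intro x hx
      have h2 := ((hχlt x ⟨hx.1, hx.2.trans hx₀L⟩).1).2
      linarith
    have hrd : ∀ x ∈ Ioo (0:ℝ) x₀, HasDerivAt r (gg (χ x) / (2 * r x)) x := by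
      intro x hx
      have hxL : x ∈ Ioo (0:ℝ) L := ⟨hx.1, hx.2.trans hx₀L⟩
      have h1 : HasDerivAt (fun y => α - χ y) (gg (χ x)) x := by
        exact ((hasDerivAt_const x α).sub (hA x hxL)).congr_deriv (by ring)
      have h2 := (Real.hasDerivAt_sqrt (ne_of_gt (hupos x hx))).comp x h1
      have h3 : (1 : ℝ) / (2 * Real.sqrt (α - χ x)) * gg (χ x) = gg (χ x) / (2 * r x) := by
        rw [hrdef]
        ring
      rw [← h3]
      exact h2
    set lb := Real.sqrt (2 * (f α - ε)) / 2 with hlbdef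
    set ub := Real.sqrt (2 * (f α + ε)) / 2 with hubdef
    have hbnd : ∀ x ∈ Ioo (0:ℝ) x₀, lb ≤ deriv r x ∧ deriv r x ≤ ub := by
      intro x hx
      have hu := hupos x hx
      have hrpos : 0 < r x := Real.sqrt_pos.mpr hu
      have hχx : χ x ∈ Icc (α - δ) α := hχin x ⟨hx.1.le, hx.2.le⟩
      have hgl : Real.sqrt (2 * (f α - ε)) * r x ≤ gg (χ x) := by
        rw [hrdef, hggdef]
        simp only
        rw [← Real.sqrt_mul (by linarith : (0:ℝ) ≤ 2 * (f α - ε))]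
        apply Real.sqrt_le_sqrt
        have h := hFlb (χ x) hχx
        linarith only [h]
      have hgu : gg (χ x) ≤ Real.sqrt (2 * (f α + ε)) * r x := by
        rw [hrdef, hggdef]
        simp only
        rw [← Real.sqrt_mul (by linarith : (0:ℝ) ≤ 2 * (f α + ε))]
        apply Real.sqrt_le_sqrt
        have h := hFub (χ x) hχx
        linarith only [h]
      rw [(hrd x hx).deriv]
      constructor
      · rw [le_div_iff₀ (by linarith : (0:ℝ) < 2 * r x)]
        calc lb * (2 * r x) = Real.sqrt (2 * (f α - ε)) * r x := by rw [hlbdef]; ring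
          _ ≤ gg (χ x) := hgl
      · rw [div_le_iff₀ (by linarith : (0:ℝ) < 2 * r x)]
        calc gg (χ x) ≤ Real.sqrt (2 * (f α + ε)) * r x := hgu
          _ = ub * (2 * r x) := by rw [hubdef]; ring
    have hrc : ContinuousOn r (Icc 0 x₀) :=
      (Real.continuous_sqrt.comp (continuous_const.sub hχcont)).continuousOn
    have hrdiff : DifferentiableOn ℝ r (interior (Icc (0:ℝ) x₀)) := by
      rw [interior_Icc]
      exact fun x hx => ((hrd x hx).differentiableAt).differentiableWithinAt
    have hr0 : r 0 = 0 := by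
      rw [hrdef]
      simp [hχ0]
    have hlow' : ∀ x ∈ Icc (0:ℝ) x₀, lb * x ≤ r x := by
      intro x hx
      have h := (convex_Icc (0:ℝ) x₀).mul_sub_le_image_sub_of_le_deriv hrc hrdiff
        (fun y hy => (hbnd y (by rw [interior_Icc] at hy; exact hy)).1) 0 ⟨le_refl _, hx₀0.le⟩ x hx hx.1
      rw [hr0] at h
      linarith [h]
    have hupp' : ∀ x ∈ Icc (0:ℝ) x₀, r x ≤ ub * x := by
      intro x hx
      have h := (convex_Icc (0:ℝ) x₀).image_sub_le_mul_sub_of_deriv_le hrc hrdiff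
        (fun y hy => (hbnd y (by rw [interior_Icc] at hy; exact hy)).2) 0 ⟨le_refl _, hx₀0.le⟩ x hx hx.1
      rw [hr0] at h
      linarith [h]
    have hsq : ∀ x ∈ Icc (0:ℝ) x₀, α - χ x = (r x) ^ 2 := by
      intro x hx
      rw [hrdef]
      exact (Real.sq_sqrt (by linarith [(hχmem x).2] : (0:ℝ) ≤ α - χ x)).symm
    have hub2 : ub ^ 2 = (f α + ε) / 2 := by
      rw [hubdef, div_pow, Real.sq_sqrt (by linarith : (0:ℝ) ≤ 2 * (f α + ε))]
      ring
    have hlb2 : lb ^ 2 = (f α - ε) / 2 := by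
      rw [hlbdef, div_pow, Real.sq_sqrt (by linarith : (0:ℝ) ≤ 2 * (f α - ε))]
      ring
    refine ⟨x₀, hx₀0, hx₀L, ?_, ?_⟩
    · intro x hx
      rw [hsq x hx]
      have h2 := hupp' x hx
      have hrnn : 0 ≤ r x := Real.sqrt_nonneg _
      calc (r x) ^ 2 ≤ (ub * x) ^ 2 := by
            apply pow_le_pow_left₀ hrnn h2
        _ = ub ^ 2 * x ^ 2 := by ring
        _ = (f α + ε) * x ^ 2 / 2 := by rw [hub2]; ring
    · intro x hx
      have hxI : x ∈ Icc (0:ℝ) x₀ := ⟨hx.1.le, hx.2⟩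
      have h1 := hlow' x hxI
      have h2 := hupp' x hxI
      have hχx : χ x ∈ Icc (α - δ) α := hχin x hxI
      have hrnn : 0 ≤ r x := Real.sqrt_nonneg _
      have husq := hsq x hxI
      have hgl : Real.sqrt (2 * (f α - ε)) * r x ≤ gg (χ x) := by
        rw [hggdef]
        simp only
        rw [hrdef, ← Real.sqrt_mul (by linarith : (0:ℝ) ≤ 2 * (f α - ε))]
        apply Real.sqrt_le_sqrt
        have h := hFlb (χ x) hχx
        linarith only [h]
      have hgu : gg (χ x) ≤ Real.sqrt (2 * (f α + ε)) * r x := by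
        rw [hggdef]
        simp only
        rw [hrdef, ← Real.sqrt_mul (by linarith : (0:ℝ) ≤ 2 * (f α + ε))]
        apply Real.sqrt_le_sqrt
        have h := hFub (χ x) hχx
        linarith only [h]
      have hlbnn : 0 ≤ lb := by
        rw [hlbdef]
        positivity
      have hubnn : 0 ≤ ub := by
        rw [hubdef]
        positivity
      constructor
      · -- (f α - ε) * x = 2 * lb * (lb * x) ≤ 2 * lb * r x = √(2(fα-ε)) * r x ≤ gg (χ x)
        have e1 : Real.sqrt (2 * (f α - ε)) = 2 * lb := by
          rw [hlbdef]
          ring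
        have e2 : (f α - ε) * x = 2 * lb * (lb * x) := by
          linear_combination (-2 : ℝ) * x * hlb2
        rw [e2]
        calc 2 * lb * (lb * x) ≤ 2 * lb * r x := by
              apply mul_le_mul_of_nonneg_left h1 (by linarith only [hlbnn])
          _ = Real.sqrt (2 * (f α - ε)) * r x := by rw [e1]
          _ ≤ gg (χ x) := hgl
      · have e1 : Real.sqrt (2 * (f α + ε)) = 2 * ub := by
          rw [hubdef]
          ring
        have e2 : (f α + ε) * x = 2 * ub * (ub * x) := by
          linear_combination (-2 : ℝ) * x * hub2
        calc gg (χ x) ≤ Real.sqrt (2 * (f α + ε)) * r x := hgu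
          _ = 2 * ub * r x := by rw [e1]
          _ ≤ 2 * ub * (ub * x) := by
              apply mul_le_mul_of_nonneg_left h2 (by linarith only [hubnn])
          _ = (f α + ε) * x := by rw [← e2]
  -- derivative of χ at 0
  have hχd0 : HasDerivAt χ 0 0 := by
    obtain ⟨x₀, hx₀0, hx₀L, hu, _⟩ := key (f α / 2) (by positivity)
      (by linarith only [hfα])
    have hC : ∀ x : ℝ, |x| ≤ x₀ → |χ x - α| ≤ (f α + f α / 2) / 2 * (|x| * |x|) := by
      intro x hx
      have habs : α - χ |x| ≤ (f α + f α / 2) * |x| ^ 2 / 2 :=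
        hu |x| ⟨abs_nonneg x, hx⟩
      have hχx : χ x = χ |x| := by
        rcases abs_choice x with h | h
        · rw [h]
        · rw [h]
          exact (hχeven x).symm
      have hle : χ x ≤ α := (hχmem x).2
      rw [abs_of_nonpos (by linarith only [hle] : χ x - α ≤ 0), hχx]
      have hxx : |x| ^ 2 = |x| * |x| := by ring
      linarith only [habs, hxx]
    rw [hasDerivAt_iff_tendsto_slope]
    apply squeeze_zero_norm' (a := fun x : ℝ => (f α + f α / 2) / 2 * |x|)
    · have h1 : ∀ᶠ x in 𝓝 (0:ℝ), |x| < x₀ := by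
        rw [Metric.eventually_nhds_iff]
        exact ⟨x₀, hx₀0, fun {y} hy => by rwa [Real.dist_eq, sub_zero] at hy⟩
      filter_upwards [h1.filter_mono nhdsWithin_le_nhds, self_mem_nhdsWithin] with x hx hx0
      have hx0' : x ≠ 0 := hx0
      rw [slope_def_field, hχ0, sub_zero, Real.norm_eq_abs, abs_div]
      have hCx := hC x hx.le
      have hxpos : 0 < |x| := abs_pos.mpr hx0'
      rw [div_le_iff₀ hxpos]
      calc |χ x - α| ≤ (f α + f α / 2) / 2 * (|x| * |x|) := hCx
        _ = (f α + f α / 2) / 2 * |x| * |x| := by ring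
    · have h2 : Tendsto (fun x : ℝ => (f α + f α / 2) / 2 * |x|) (𝓝 0) (𝓝 0) := by
        have h3 : Continuous fun x : ℝ => (f α + f α / 2) / 2 * |x| :=
          continuous_const.mul continuous_abs
        have h4 := h3.tendsto 0
        simpa using h4
      exact h2.mono_left nhdsWithin_le_nhds
  have hψ0 : deriv χ 0 = 0 := hχd0.deriv
  have hψodd : ∀ x, deriv χ (-x) = -deriv χ x := by
    intro x
    have h1 : deriv (fun y => χ (-y)) x = -deriv χ (-x) := deriv_comp_neg χ x
    have h2 : (fun y => χ (-y)) = χ := funext hχeven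
    rw [h2] at h1
    linarith only [h1]
  -- second derivative at 0
  have hψd0 : HasDerivAt (deriv χ) (-(f α)) 0 := by
    rw [hasDerivAt_iff_tendsto_slope]
    rw [Metric.tendsto_nhdsWithin_nhds]
    intro ε' hε'
    have hεpos : 0 < min (ε' / 2) (f α / 2) :=
      lt_min (by linarith only [hε']) (by positivity)
    obtain ⟨x₀, hx₀0, hx₀L, hu, hg⟩ := key (min (ε' / 2) (f α / 2)) hεpos
      (lt_of_le_of_lt (min_le_right _ _) (by linarith only [hfα]))
    refine ⟨x₀, hx₀0, ?_⟩
    intro x hx hdist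
    have hx0 : x ≠ 0 := hx
    rw [Real.dist_eq, sub_zero] at hdist
    rw [Real.dist_eq]
    have hεe : min (ε' / 2) (f α / 2) ≤ ε' / 2 := min_le_left _ _
    have hbd : ∀ y ∈ Ioc (0:ℝ) x₀, |(-gg (χ y)) / y + f α| ≤ min (ε' / 2) (f α / 2) := by
      intro y hy
      obtain ⟨hg1, hg2⟩ := hg y hy
      have hy0 : 0 < y := hy.1
      have q1 : gg (χ y) / y ≤ f α + min (ε' / 2) (f α / 2) := (div_le_iff₀ hy0).mpr hg2
      have q2 : f α - min (ε' / 2) (f α / 2) ≤ gg (χ y) / y := (le_div_iff₀ hy0).mpr hg1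
      have q3 : (-gg (χ y)) / y = -(gg (χ y) / y) := by ring
      rw [q3, abs_le]
      constructor <;> linarith only [q1, q2]
    rw [slope_def_field, hψ0, sub_zero, sub_zero]
    rcases lt_or_gt_of_ne hx0 with hneg | hpos
    · have hym : -x ∈ Ioc (0:ℝ) x₀ := by
        constructor
        · linarith
        · rw [abs_of_neg hneg] at hdist
          linarith
      have hxL : -x ∈ Ioo (0:ℝ) L := ⟨neg_pos.mpr hneg, lt_of_le_of_lt hym.2 hx₀L⟩
      have hd := (hA (-x) hxL).deriv
      have hodd := hψodd x
      have hψx : deriv χ x = gg (χ (-x)) := by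
        rw [hd] at hodd
        linarith only [hodd]
      rw [hψx, sub_neg_eq_add]
      have q : gg (χ (-x)) / x + f α = (-gg (χ (-x))) / (-x) + f α := by
        rw [neg_div_neg_eq]
      rw [q]
      have h9 := hbd (-x) hym
      linarith only [h9, hεe, hε']
    · have hxm : x ∈ Ioc (0:ℝ) x₀ := by
        constructor
        · exact hpos
        · rw [abs_of_pos hpos] at hdist
          exact hdist.le
      have hψx : deriv χ x = -gg (χ x) :=
        (hA x ⟨hpos, lt_of_le_of_lt hxm.2 hx₀L⟩).deriv
      rw [hψx, sub_neg_eq_add]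
      have h9 := hbd x hxm
      linarith only [h9, hεe, hε']
  -- the ODE on (0, L)
  have hodepos : ∀ x ∈ Ioo (0:ℝ) L, HasDerivAt (deriv χ) (-(f (χ x))) x := by
    intro x hx
    have hwmem := (hχlt x hx).1
    have hFw : F (χ x) < F α := Fkey (χ x) ⟨hwmem.1.le, hwmem.2⟩
    have h2pos : 0 < 2 * (F α - F (χ x)) := by linarith only [hFw]
    have hggw : 0 < gg (χ x) := Real.sqrt_pos.mpr h2pos
    have h1 : HasDerivAt (fun v => 2 * (F α - F v)) (2 * (0 - f (χ x))) (χ x) :=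
      ((hasDerivAt_const (χ x) (F α)).sub (hFd (χ x))).const_mul 2
    have hgd : HasDerivAt gg (-(f (χ x)) / gg (χ x)) (χ x) := by
      have h2 := h1.sqrt (ne_of_gt h2pos)
      have hval : 2 * (0 - f (χ x)) / (2 * Real.sqrt (2 * (F α - F (χ x))))
          = -(f (χ x)) / gg (χ x) := by
        rw [hggdef]
        have hs : (0:ℝ) < Real.sqrt (2 * (F α - F (χ x))) := Real.sqrt_pos.mpr h2pos
        field_simp
        ring
      rw [hggdef]
      rw [← hval]
      exact h2
    have h3 := (hgd.comp x (hA x hx)).neg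
    have hval2 : -(-(f (χ x)) / gg (χ x) * -gg (χ x)) = -(f (χ x)) := by
      field_simp
    rw [hval2] at h3
    have hev : deriv χ =ᶠ[𝓝 x] fun y => -gg (χ y) := by
      filter_upwards [isOpen_Ioo.mem_nhds hx] with y hy
      exact (hA y hy).deriv
    exact h3.congr_of_eventuallyEq hev
  have hode : ∀ x ∈ Ioo (-L) L, HasDerivAt (deriv χ) (-(f (χ x))) x := by
    intro x hx
    rcases lt_trichotomy x 0 with h | h | h
    · have h1 := hodepos (-x) ⟨by linarith only [h], by linarith only [hx.1]⟩
      have h2 : HasDerivAt (fun y => deriv χ (-y)) (-(f (χ (-x))) * -1) x :=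
        h1.comp x (hasDerivAt_neg x)
      have h3 : HasDerivAt (fun y => -deriv χ (-y)) (-(-(f (χ (-x))) * -1)) x := h2.neg
      have h4 : (fun y => -deriv χ (-y)) = deriv χ := funext fun y => by
        rw [hψodd y]
        ring
      rw [h4] at h3
      have h5 : -(-(f (χ (-x))) * -1) = -(f (χ x)) := by
        rw [hχeven x]
        ring
      rwa [h5] at h3
    · subst h
      rw [hχ0]
      exact hψd0
    · exact hodepos x ⟨h, hx.2⟩
  have hdiff : ∀ x ∈ Ioo (-L) L, DifferentiableAt ℝ χ x := by
    intro x hx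
    rcases lt_trichotomy x 0 with h | h | h
    · have h1 := (hA (-x) ⟨by linarith only [h], by linarith only [hx.1]⟩).differentiableAt
      have h2 : DifferentiableAt ℝ (fun y => χ (-y)) x :=
        h1.comp x differentiableAt_id.neg
      have h3 : (fun y => χ (-y)) = χ := funext hχeven
      rwa [h3] at h2
    · subst h
      exact hχd0.differentiableAt
    · exact (hA x ⟨h, hx.2⟩).differentiableAt
  exact ⟨χ, hχeven, hχanti, hdiff, hode, hχ0, hχL, (hχeven L).trans hχL, hout⟩
end

section
/- Assume b1 > d1, b2 > d2 and γ^F > 0, and let θ^F be the unique real in (0, K1^F(1 − d1/b1)) with F^F(θ^F) = F^F(−K2^F(1 − d2/b2)). Let ω̃ : ℝ → ℝ be a bounded twice-differentiable solution of −ω̃'' = f(x, ω̃) on ℝ. If there exists ỹ < 0 such that ω̃(ỹ) > θ^F, then ω̃(x) → K1^F(1 − d1/b1) as x → −∞. -/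
open Filter Topology

section helpers
open Set

variable {b1 d1 b2 d2 K1 K2 : ℝ}

lemma reactionTerm_continuous : Continuous (reactionTerm b1 d1 b2 d2 K1 K2) := by
  unfold reactionTerm
  fun_prop

lemma hasDerivAt_reactionPotential (w : ℝ) :
    HasDerivAt (reactionPotential b1 d1 b2 d2 K1 K2)
      (reactionTerm b1 d1 b2 d2 K1 K2 w) w := by
  have hc : Continuous (reactionTerm b1 d1 b2 d2 K1 K2) := reactionTerm_continuous
  exact intervalIntegral.integral_hasDerivAt_right (hc.intervalIntegrable _ _)
    (hc.stronglyMeasurableAtFilter _ _) hc.continuousAt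

lemma reactionPotential_continuous : Continuous (reactionPotential b1 d1 b2 d2 K1 K2) :=
  continuous_iff_continuousAt.2 fun w =>
    (hasDerivAt_reactionPotential w).differentiableAt.continuousAt

/-- factorization for `w ≥ 0` -/
lemma reactionTerm_nonneg_eq (hb1 : b1 ≠ 0) (hK1 : K1 ≠ 0) {w : ℝ} (hw : 0 ≤ w) :
    reactionTerm b1 d1 b2 d2 K1 K2 w = b1 * w / K1 * (K1 * (1 - d1 / b1) - w) := by
  unfold reactionTerm
  rw [max_eq_left hw, max_eq_right (by linarith : -w ≤ 0)]
  field_simp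
  ring

/-- factorization for `w ≤ 0` -/
lemma reactionTerm_nonpos_eq (hb2 : b2 ≠ 0) (hK2 : K2 ≠ 0) {w : ℝ} (hw : w ≤ 0) :
    reactionTerm b1 d1 b2 d2 K1 K2 w = b2 * w / K2 * (K2 * (1 - d2 / b2) + w) := by
  unfold reactionTerm
  rw [max_eq_right hw, max_eq_left (by linarith : 0 ≤ -w)]
  field_simp
  ring


section signs
lemma f_pos_mid (hb1 : 0 < b1) (hK1 : 0 < K1) {w : ℝ} (hw : 0 < w) (hw2 : w < K1 * (1 - d1 / b1)) :
    0 < reactionTerm b1 d1 b2 d2 K1 K2 w := by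
  rw [reactionTerm_nonneg_eq hb1.ne' hK1.ne' hw.le]
  exact mul_pos (div_pos (mul_pos hb1 hw) hK1) (by linarith)

lemma f_neg_high (hb1 : 0 < b1) (hK1 : 0 < K1) {w : ℝ} (hw : 0 < w) (hw2 : K1 * (1 - d1 / b1) < w) :
    reactionTerm b1 d1 b2 d2 K1 K2 w < 0 := by
  rw [reactionTerm_nonneg_eq hb1.ne' hK1.ne' hw.le]
  exact mul_neg_of_pos_of_neg (div_pos (mul_pos hb1 hw) hK1) (by linarith)

lemma f_neg_mid (hb2 : 0 < b2) (hK2 : 0 < K2) {w : ℝ} (hw : w < 0) (hw2 : -(K2 * (1 - d2 / b2)) < w) :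
    reactionTerm b1 d1 b2 d2 K1 K2 w < 0 := by
  rw [reactionTerm_nonpos_eq hb2.ne' hK2.ne' hw.le]
  exact mul_neg_of_neg_of_pos (div_neg_of_neg_of_pos (mul_neg_of_pos_of_neg hb2 hw) hK2)
    (by linarith)

lemma f_pos_low (hb2 : 0 < b2) (hK2 : 0 < K2) {w : ℝ} (hw : w < -(K2 * (1 - d2 / b2))) (hw0 : w < 0) :
    0 < reactionTerm b1 d1 b2 d2 K1 K2 w := by
  rw [reactionTerm_nonpos_eq hb2.ne' hK2.ne' hw0.le]
  exact mul_pos_of_neg_of_neg (div_neg_of_neg_of_pos (mul_neg_of_pos_of_neg hb2 hw0) hK2)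
    (by linarith)

lemma f_eq_zero_pos (hb1 : 0 < b1) (hK1 : 0 < K1) {w : ℝ} (hw : 0 < w) (h : reactionTerm b1 d1 b2 d2 K1 K2 w = 0) :
    w = K1 * (1 - d1 / b1) := by
  rw [reactionTerm_nonneg_eq hb1.ne' hK1.ne' hw.le] at h
  rcases mul_eq_zero.1 h with h' | h'
  · exact absurd h' (div_pos (mul_pos hb1 hw) hK1).ne'
  · linarith


lemma deriv_reactionPotential (w : ℝ) :
    deriv (reactionPotential b1 d1 b2 d2 K1 K2) w = reactionTerm b1 d1 b2 d2 K1 K2 w :=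
  (hasDerivAt_reactionPotential w).deriv

lemma F_strictMonoOn_mid (hb1 : 0 < b1) (hK1 : 0 < K1) :
    StrictMonoOn (reactionPotential b1 d1 b2 d2 K1 K2) (Icc 0 (K1 * (1 - d1 / b1))) := by
  apply strictMonoOn_of_deriv_pos (convex_Icc _ _) reactionPotential_continuous.continuousOn
  intro x hx
  rw [interior_Icc] at hx
  rw [deriv_reactionPotential]
  exact f_pos_mid hb1 hK1 hx.1 hx.2

lemma F_strictAntiOn_high (hb1 : 0 < b1) (hd1 : 0 < d1) (hbd1 : d1 < b1) (hK1 : 0 < K1) :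
    StrictAntiOn (reactionPotential b1 d1 b2 d2 K1 K2) (Ici (K1 * (1 - d1 / b1))) := by
  apply strictAntiOn_of_deriv_neg (convex_Ici _) reactionPotential_continuous.continuousOn
  intro x hx
  rw [interior_Ici, Set.mem_Ioi] at hx
  rw [deriv_reactionPotential]
  have hα : 0 < K1 * (1 - d1 / b1) := by
    have : 0 < 1 - d1 / b1 := by
      have := (div_lt_one hb1).2 hbd1
      linarith
    positivity
  exact f_neg_high hb1 hK1 (by linarith) hx

lemma F_strictAntiOn_negmid (hb2 : 0 < b2) (hK2 : 0 < K2) :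
    StrictAntiOn (reactionPotential b1 d1 b2 d2 K1 K2) (Icc (-(K2 * (1 - d2 / b2))) 0) := by
  apply strictAntiOn_of_deriv_neg (convex_Icc _ _) reactionPotential_continuous.continuousOn
  intro x hx
  rw [interior_Icc] at hx
  rw [deriv_reactionPotential]
  exact f_neg_mid hb2 hK2 hx.2 hx.1

lemma F_strictMonoOn_low (hb2 : 0 < b2) (hd2 : 0 < d2) (hbd2 : d2 < b2) (hK2 : 0 < K2) :
    StrictMonoOn (reactionPotential b1 d1 b2 d2 K1 K2) (Iic (-(K2 * (1 - d2 / b2)))) := by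
  apply strictMonoOn_of_deriv_pos (convex_Iic _) reactionPotential_continuous.continuousOn
  intro x hx
  rw [interior_Iic, Set.mem_Iio] at hx
  rw [deriv_reactionPotential]
  have hβ : 0 < K2 * (1 - d2 / b2) := by
    have : 0 < 1 - d2 / b2 := by
      have := (div_lt_one hb2).2 hbd2
      linarith
    positivity
  exact f_pos_low hb2 hK2 hx (by linarith)

end signs
end helpers


/-- The heterogeneous reaction term `f(x, ω)`: equal to `f^F` for `x < 0` and `f^U` for
`x > 0`. -/
noncomputable def hetReaction (b1 d1 b2 d2 K1F K1U K2F K2U : ℝ) (x w : ℝ) : ℝ :=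
  if x < 0 then reactionTerm b1 d1 b2 d2 K1F K2F w else reactionTerm b1 d1 b2 d2 K1U K2U w

/-- A stationary solution of `-ω'' = f(x, ω)` on `ℝ`: a `C¹` function whose derivative is
differentiable away from the interface `x = 0` with `ω'' = -f(x, ω)` there. -/
def IsStatSol (b1 d1 b2 d2 K1F K1U K2F K2U : ℝ) (w : ℝ → ℝ) : Prop :=
  Differentiable ℝ w ∧
    ∀ x : ℝ, x ≠ 0 →
      HasDerivAt (deriv w) (-(hetReaction b1 d1 b2 d2 K1F K1U K2F K2U x (w x))) x

open Set in
set_option maxHeartbeats 1000000 in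
/-- Lemma lem:omega_monotone_F: a bounded stationary solution which exceeds
`θ^F` somewhere on `{x < 0}` converges to `K1^F (1 - d1/b1)` as `x → -∞`. -/
theorem stmt9 (b1 b2 d1 d2 K1F K1U K2F K2U : ℝ)
    (hb1 : 0 < b1) (hb2 : 0 < b2) (hd1 : 0 < d1) (hd2 : 0 < d2)
    (hK1F : 0 < K1F) (hK1U : 0 < K1U) (hK2F : 0 < K2F) (hK2U : 0 < K2U)
    (hbd1 : d1 < b1) (hbd2 : d2 < b2)
    -- γ^F > 0
    (hγF : 0 < reactionPotential b1 d1 b2 d2 K1F K2F (K1F * (1 - d1 / b1))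
            - reactionPotential b1 d1 b2 d2 K1F K2F (-(K2F * (1 - d2 / b2))))
    -- θ^F : the unique real in (0, K1^F(1 - d1/b1)) with F^F(θ^F) = F^F(-K2^F(1 - d2/b2))
    (θF : ℝ) (hθmem : θF ∈ Set.Ioo 0 (K1F * (1 - d1 / b1)))
    (hθval : reactionPotential b1 d1 b2 d2 K1F K2F θF
      = reactionPotential b1 d1 b2 d2 K1F K2F (-(K2F * (1 - d2 / b2))))
    -- ω̃ : a bounded (twice-differentiable) solution of -ω̃'' = f(x, ω̃)
    (ω : ℝ → ℝ)
    (hsol : IsStatSol b1 d1 b2 d2 K1F K1U K2F K2U ω)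
    (hbdd : ∃ M : ℝ, ∀ x, |ω x| ≤ M)
    -- the solution exceeds θ^F at some point ỹ < 0
    (hy : ∃ y : ℝ, y < 0 ∧ θF < ω y) :
    Tendsto ω atBot (𝓝 (K1F * (1 - d1 / b1))) := by
  obtain ⟨M, hM⟩ := hbdd
  obtain ⟨ty, hy0, hyθ⟩ := hy
  set α := K1F * (1 - d1 / b1) with hαdef
  set β := K2F * (1 - d2 / b2) with hβdef
  set F := reactionPotential b1 d1 b2 d2 K1F K2F with hFdef
  set f := reactionTerm b1 d1 b2 d2 K1F K2F with hfdef
  have hθ0 : 0 < θF := hθmem.1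
  have hθα : θF < α := hθmem.2
  have hM0 : 0 ≤ M := le_trans (abs_nonneg _) (hM 0)
  have hωcont : Continuous ω := hsol.1.continuous
  have hω'cont : ∀ x : ℝ, x < 0 → ContinuousAt (deriv ω) x := fun x hx =>
    (hsol.2 x hx.ne).differentiableAt.continuousAt
  have hODE : ∀ x : ℝ, x < 0 → HasDerivAt (deriv ω) (-(f (ω x))) x := by
    intro x hx
    have h := hsol.2 x hx.ne
    rwa [hetReaction, if_pos hx] at h
  have hFmono : StrictMonoOn F (Icc 0 α) := F_strictMonoOn_mid hb1 hK1F
  have hFanti : StrictAntiOn F (Ici α) := F_strictAntiOn_high hb1 hd1 hbd1 hK1F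
  have hFanti2 : StrictAntiOn F (Icc (-β) 0) := F_strictAntiOn_negmid hb2 hK2F
  have hFmono2 : StrictMonoOn F (Iic (-β)) := F_strictMonoOn_low hb2 hd2 hbd2 hK2F
  have hFcont : Continuous F := reactionPotential_continuous
  have hfcont : Continuous f := reactionTerm_continuous
  have hfzero : ∀ w, 0 < w → f w = 0 → w = α := fun w hw h => f_eq_zero_pos hb1 hK1F hw h
  have hFf : ∀ w, HasDerivAt F (f w) w := fun w => hasDerivAt_reactionPotential w
  -- energy conservation on (-∞, ty]
  set E := (deriv ω ty) ^ 2 / 2 + F (ω ty) with hEdef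
  have heng : ∀ x ≤ ty, (deriv ω x) ^ 2 / 2 + F (ω x) = E := by
    intro x hx
    rcases eq_or_lt_of_le hx with rfl | hx'
    · rfl
    · set g : ℝ → ℝ := fun t => (deriv ω t) ^ 2 / 2 + F (ω t) with hgdef
      have hgc : ContinuousOn g (Icc x ty) := by
        intro t ht
        have ht0 : t < 0 := lt_of_le_of_lt ht.2 hy0
        exact (((((hω'cont t ht0).pow 2).div_const 2).add
          ((hFcont.comp hωcont).continuousAt))).continuousWithinAt
      have hgd : ∀ t ∈ Ico x ty, HasDerivWithinAt g 0 (Ici t) t := by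
        intro t ht
        have ht0 : t < 0 := lt_trans ht.2 hy0
        have h1 : HasDerivAt (deriv ω) (-(f (ω t))) t := hODE t ht0
        have h2 : HasDerivAt (fun s => (deriv ω s) ^ 2 / 2)
            ((2 * deriv ω t ^ 1 * (-(f (ω t)))) / 2) t := (h1.pow 2).div_const 2
        have h3 : HasDerivAt (fun s => F (ω s)) (f (ω t) * deriv ω t) t :=
          (hFf (ω t)).comp t (hsol.1 t).hasDerivAt
        have h4 : HasDerivAt g 0 t := by
          have := h2.add h3
          exact this.congr_deriv (by ring)
        exact h4.hasDerivWithinAt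
      have hgeq := constant_of_has_deriv_right_zero hgc hgd ty ⟨hx, le_refl ty⟩
      -- hgeq : g ty = g x
      have : g x = g ty := hgeq.symm
      simpa [hgdef, hEdef] using this
  have heng2 : ∀ x ≤ ty, (deriv ω x) ^ 2 = 2 * (E - F (ω x)) := by
    intro x hx
    linear_combination 2 * (heng x hx)
  have hFle : ∀ x ≤ ty, F (ω x) ≤ E := by
    intro x hx
    have h1 := heng2 x hx
    nlinarith [sq_nonneg (deriv ω x)]
  have hβ0 : 0 < β := by
    rw [hβdef]
    have : 0 < 1 - d2 / b2 := by
      have := (div_lt_one hb2).2 hbd2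
      linarith
    positivity
  -- F is at most F θF on (-∞, θF]
  have hF4 : ∀ w ≤ θF, F w ≤ F θF := by
    intro w hw
    rcases le_or_gt 0 w with h0 | h0
    · exact hFmono.monotoneOn ⟨h0, le_trans hw hθα.le⟩ ⟨hθ0.le, hθα.le⟩ hw
    · rcases le_or_gt (-β) w with h1 | h1
      · rw [hθval]
        exact hFanti2.antitoneOn ⟨le_refl (-β), by linarith⟩ ⟨h1, h0.le⟩ h1
      · rw [hθval]
        exact hFmono2.monotoneOn (mem_Iic.2 h1.le) (mem_Iic.2 (le_refl (-β))) h1.le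
  clear_value α β F f E
  -- ω stays above θF on (-∞, ty]
  have hθlt : ∀ x ≤ ty, θF < ω x := by
    by_contra hcon
    push_neg at hcon
    obtain ⟨x₀, hx₀y, hx₀⟩ := hcon
    set A : Set ℝ := Iic ty ∩ ω ⁻¹' (Iic θF) with hA
    have hAne : A.Nonempty := ⟨x₀, hx₀y, hx₀⟩
    have hAbdd : BddAbove A := ⟨ty, fun z hz => hz.1⟩
    have hAcl : IsClosed A := isClosed_Iic.inter (isClosed_Iic.preimage hωcont)
    set a := sSup A with ha
    have haA : a ∈ A := hAcl.csSup_mem hAne hAbdd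
    have hay : a ≤ ty := haA.1
    have haθ : ω a ≤ θF := haA.2
    have hay' : a < ty := lt_of_le_of_ne hay (fun h => absurd (h ▸ haθ) (not_le.2 hyθ))
    have ha0 : a < 0 := lt_trans hay' hy0
    have hgt : ∀ z, a < z → z ≤ ty → θF < ω z := by
      intro z h1 h2
      by_contra h3
      exact absurd (le_csSup hAbdd ⟨h2, not_lt.1 h3⟩) (not_le.2 h1)
    have hωa : ω a = θF := by
      refine le_antisymm haθ ?_
      have htd : Tendsto ω (𝓝[>] a) (𝓝 (ω a)) :=
        (hωcont.continuousAt).continuousWithinAt.tendsto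
      refine ge_of_tendsto htd ?_
      filter_upwards [Ioc_mem_nhdsGT_of_mem ⟨le_refl a, hay'⟩] with z hz
      exact (hgt z hz.1 hz.2).le
    -- energy exceeds F θF
    have hEθ : F θF < E := by
      set v := min ((θF + α) / 2) ((θF + ω ty) / 2) with hv
      have hv1 : θF < v := lt_min (by linarith) (by linarith)
      have hv2 : v < α := lt_of_le_of_lt (min_le_left _ _) (by linarith)
      have hv3 : v < ω ty := lt_of_le_of_lt (min_le_right _ _) (by linarith)
      obtain ⟨p, hp, hpv⟩ := intermediate_value_Icc hay hωcont.continuousOn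
        ⟨by rw [hωa]; exact hv1.le, hv3.le⟩
      have h5 : F θF < F v := hFmono ⟨hθ0.le, hθα.le⟩ ⟨by linarith, hv2.le⟩ hv1
      have h6 : F v ≤ E := hpv ▸ hFle p hp.2
      linarith
    set δ := Real.sqrt (2 * (E - F θF)) with hδdef
    have hδ : 0 < δ := Real.sqrt_pos.2 (by linarith)
    have hδsq : δ ^ 2 = 2 * (E - F θF) := Real.sq_sqrt (by linarith)
    have key : ∀ x ≤ ty, ω x ≤ θF → δ ≤ |deriv ω x| := by
      intro x h1 h2
      have h3 := heng2 x h1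
      have h4 : F (ω x) ≤ F θF := hF4 _ h2
      have h5 : δ ^ 2 ≤ (deriv ω x) ^ 2 := by rw [hδsq, h3]; linarith
      calc δ = Real.sqrt (δ ^ 2) := by rw [Real.sqrt_sq hδ.le]
        _ ≤ Real.sqrt ((deriv ω x) ^ 2) := Real.sqrt_le_sqrt h5
        _ = |deriv ω x| := Real.sqrt_sq_eq_abs _
    -- the derivative of ω at a is at least δ
    have hda0 : 0 ≤ deriv ω a := by
      have hd := (hsol.1 a).hasDerivAt
      have hslope := hasDerivAt_iff_tendsto_slope.1 hd
      have hslope' : Tendsto (slope ω a) (𝓝[>] a) (𝓝 (deriv ω a)) :=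
        hslope.mono_left (nhdsWithin_mono a (fun z hz => hz.ne'))
      refine ge_of_tendsto hslope' ?_
      filter_upwards [Ioc_mem_nhdsGT_of_mem ⟨le_refl a, hay'⟩] with z hz
      rw [slope_def_field]
      have := hgt z hz.1 hz.2
      have hza : 0 < z - a := by linarith [hz.1]
      rw [div_eq_mul_inv]
      have : 0 ≤ ω z - ω a := by rw [hωa]; linarith
      positivity
    have hδa : δ ≤ deriv ω a := by
      have := key a hay haθ
      rwa [abs_of_nonneg hda0] at this
    -- the derivative stays above δ/2 on (-∞, a]
    have hB' : ∀ x ≤ a, δ / 2 < deriv ω x := by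
      by_contra hcon2
      push_neg at hcon2
      obtain ⟨x₁, hx₁a, hx₁⟩ := hcon2
      set g2 : ℝ → ℝ := fun x => deriv ω (min x a) with hg2
      have hg2cont : Continuous g2 := by
        rw [continuous_iff_continuousAt]
        intro x
        have h1 : ContinuousAt (deriv ω) (min x a) :=
          hω'cont _ (lt_of_le_of_lt (min_le_right x a) ha0)
        have h2 : Continuous fun x : ℝ => min x a := continuous_id.min continuous_const
        have h3 : g2 = (deriv ω) ∘ (fun x : ℝ => min x a) := rfl
        rw [h3]
        exact ContinuousAt.comp (f := fun x : ℝ => min x a) h1 h2.continuousAt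
      have hBeq : ∀ x, x ≤ a → g2 x = deriv ω x := by
        intro x hx
        rw [hg2]
        simp [min_eq_left hx]
      set B : Set ℝ := Iic a ∩ g2 ⁻¹' (Iic (δ / 2)) with hB
      have hBne : B.Nonempty := ⟨x₁, hx₁a, by
        rw [mem_preimage, mem_Iic, hBeq x₁ hx₁a]; exact hx₁⟩
      have hBbdd : BddAbove B := ⟨a, fun z hz => hz.1⟩
      have hBcl : IsClosed B := isClosed_Iic.inter (isClosed_Iic.preimage hg2cont)
      set t := sSup B with ht
      have htB : t ∈ B := hBcl.csSup_mem hBne hBbdd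
      have hta : t ≤ a := htB.1
      have htd : deriv ω t ≤ δ / 2 := by rw [← hBeq t hta]; exact htB.2
      have hta' : t < a := lt_of_le_of_ne hta (fun h => by rw [h] at htd; linarith)
      have hgt2 : ∀ z, t < z → z ≤ a → δ / 2 < deriv ω z := by
        intro z h1 h2
        by_contra h3
        refine absurd (le_csSup hBbdd ⟨h2, ?_⟩) (not_le.2 h1)
        rw [mem_preimage, mem_Iic, hBeq z h2]
        exact not_lt.1 h3
      obtain ⟨ξ, hξ, hξeq⟩ := exists_hasDerivAt_eq_slope ω (deriv ω) hta'
        hωcont.continuousOn (fun z _ => (hsol.1 z).hasDerivAt)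
      have h7 : δ / 2 < (ω a - ω t) / (a - t) := by
        rw [← hξeq]; exact hgt2 ξ hξ.1 hξ.2.le
      have hωt : ω t < θF := by
        have hat : 0 < a - t := by linarith
        have h8 : δ / 2 * (a - t) < ω a - ω t := (lt_div_iff₀ hat).1 h7
        rw [hωa] at h8
        have h8b : 0 < δ / 2 * (a - t) := mul_pos (half_pos hδ) hat
        linarith
      have h9 : δ ≤ |deriv ω t| := key t (le_trans hta hay) hωt.le
      have h10 : deriv ω t ≤ -δ := by
        rcases le_or_gt 0 (deriv ω t) with h | h
        · rw [abs_of_nonneg h] at h9; linarith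
        · rw [abs_of_neg h] at h9; linarith
      -- find a small interval to the right of t on which ω < θF
      have hopen : IsOpen {z : ℝ | ω z < θF} := isOpen_lt hωcont continuous_const
      obtain ⟨ε, hε, hball⟩ := Metric.isOpen_iff.1 hopen t hωt
      set s := min (t + ε / 2) a with hs
      have hts : t < s := lt_min (by linarith) hta'
      have hsa : s ≤ a := min_le_right _ _
      have hsub : ∀ z ∈ Icc t s, ω z < θF := by
        intro z hz
        apply hball
        rw [Metric.mem_ball, Real.dist_eq, abs_of_nonneg (by linarith [hz.1])]
        have : z ≤ t + ε / 2 := le_trans hz.2 (min_le_left _ _)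
        linarith
      have hcd : ContinuousOn (deriv ω) (Icc t s) := fun z hz =>
        (hω'cont z (lt_of_le_of_lt (le_trans hz.2 hsa) ha0)).continuousWithinAt
      have hds : δ / 2 < deriv ω s := hgt2 s hts hsa
      have h0mem : (0 : ℝ) ∈ Icc (deriv ω t) (deriv ω s) := ⟨by linarith, by linarith⟩
      obtain ⟨z', hz', hz'0⟩ := intermediate_value_Icc hts.le hcd h0mem
      have hωz' : ω z' < θF := hsub z' hz'
      have h11 := key z' (le_trans (le_trans hz'.2 hsa) hay) hωz'.le
      rw [hz'0, abs_zero] at h11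
      linarith
    -- ω is unbounded below: contradiction
    have hnum : 0 < 2 * (θF + M) + 2 := by linarith
    set x₂ := a - (2 * (θF + M) + 2) / δ with hx₂def
    have hx₂ : x₂ < a := by
      rw [hx₂def]
      have : 0 < (2 * (θF + M) + 2) / δ := div_pos hnum hδ
      linarith
    obtain ⟨ξ, hξ, hξeq⟩ := exists_hasDerivAt_eq_slope ω (deriv ω) hx₂
      hωcont.continuousOn (fun z _ => (hsol.1 z).hasDerivAt)
    have h12 : δ / 2 < (ω a - ω x₂) / (a - x₂) := by
      rw [← hξeq]; exact hB' ξ hξ.2.le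
    have hax : 0 < a - x₂ := by linarith
    have h13 : δ / 2 * (a - x₂) < ω a - ω x₂ := (lt_div_iff₀ hax).1 h12
    have h14 : a - x₂ = (2 * (θF + M) + 2) / δ := by rw [hx₂def]; ring
    have h15 : δ / 2 * ((2 * (θF + M) + 2) / δ) = θF + M + 1 := by
      field_simp
    rw [h14, h15, hωa] at h13
    have h16 : -M ≤ ω x₂ := (abs_le.1 (hM x₂)).1
    linarith
  -- Endgame: any limit of ω at -∞ lying above θF must be α
  have hend : ∀ L, θF ≤ L → Tendsto ω atBot (𝓝 L) → Tendsto ω atBot (𝓝 α) := by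
    intro L hLθ hconv
    suffices hLα : L = α by rwa [hLα] at hconv
    obtain ⟨m2, hm2⟩ : ∃ m2 : ℝ, m2 = 2 * (E - F L) := ⟨_, rfl⟩
    have hsq : Tendsto (fun x => (deriv ω x) ^ 2) atBot (𝓝 m2) := by
      have h1 : Tendsto (fun x => 2 * (E - F (ω x))) atBot (𝓝 m2) := by
        rw [hm2]
        exact (tendsto_const_nhds.sub ((hFcont.tendsto L).comp hconv)).const_mul 2
      refine h1.congr' ?_
      filter_upwards [eventually_atBot.2 ⟨ty, fun x hx => heng2 x hx⟩] with x hx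
      exact hx.symm
    have hm2nonneg : 0 ≤ m2 :=
      ge_of_tendsto hsq (Eventually.of_forall fun x => sq_nonneg _)
    have hm20 : m2 = 0 := by
      by_contra h
      have hm2pos : 0 < m2 := lt_of_le_of_ne hm2nonneg (Ne.symm h)
      obtain ⟨c, hc⟩ : ∃ c : ℝ, c = Real.sqrt (m2 / 2) := ⟨_, rfl⟩
      have hc0 : 0 < c := by rw [hc]; exact Real.sqrt_pos.2 (by linarith)
      have hcsq : c ^ 2 = m2 / 2 := by rw [hc]; exact Real.sq_sqrt (by linarith)
      have h1 : ∀ᶠ x in atBot, m2 / 2 < (deriv ω x) ^ 2 :=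
        hsq.eventually (eventually_gt_nhds (by linarith))
      have h2 : ∀ᶠ x in atBot, |ω x - L| < c / 4 := by
        have := Metric.tendsto_nhds.1 hconv (c / 4) (by positivity)
        simpa [Real.dist_eq] using this
      obtain ⟨X1, hX1⟩ := eventually_atBot.1 (h1.and h2)
      obtain ⟨x, hx⟩ : ∃ x : ℝ, x = min X1 ty - 1 := ⟨_, rfl⟩
      have hx1 : x ≤ X1 := by
        rw [hx]; have := min_le_left X1 ty; linarith
      have hx2 : x + 1 ≤ X1 := by
        rw [hx]; have := min_le_left X1 ty; linarith
      have hx3 : x + 1 ≤ ty := by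
        rw [hx]; have := min_le_right X1 ty; linarith
      obtain ⟨ξ, hξ, hξeq⟩ := exists_hasDerivAt_eq_slope ω (deriv ω)
        (by linarith : x < x + 1) hωcont.continuousOn
        (fun z _ => (hsol.1 z).hasDerivAt)
      have hξX : ξ ≤ X1 := le_trans hξ.2.le hx2
      have h3 : m2 / 2 < (deriv ω ξ) ^ 2 := (hX1 ξ hξX).1
      have h4 : c < |deriv ω ξ| := by
        have h5 : c ^ 2 < |deriv ω ξ| ^ 2 := by
          rw [hcsq, sq_abs]
          exact h3
        by_contra h6
        push_neg at h6
        exact absurd (pow_le_pow_left₀ (abs_nonneg _) h6 2) (not_le.2 h5)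
      have h7 : |ω (x + 1) - L| < c / 4 := (hX1 (x + 1) hx2).2
      have h8 : |ω x - L| < c / 4 := (hX1 x hx1).2
      have h9 : |deriv ω ξ| < c / 2 := by
        rw [hξeq]
        have h10 : (x + 1) - x = 1 := by ring
        rw [h10, div_one]
        calc |ω (x + 1) - ω x| = |(ω (x + 1) - L) - (ω x - L)| := by ring_nf
          _ ≤ |ω (x + 1) - L| + |ω x - L| := abs_sub _ _
          _ < c / 2 := by linarith
      linarith
    have hFLE : F L = E := by
      rw [hm2] at hm20
      linarith
    have hd0 : Tendsto (deriv ω) atBot (𝓝 0) := by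
      have habs : Tendsto (fun x => |deriv ω x|) atBot (𝓝 0) := by
        have h1 : Tendsto (fun x => Real.sqrt ((deriv ω x) ^ 2)) atBot (𝓝 (Real.sqrt 0)) :=
          (Real.continuous_sqrt.tendsto 0).comp (hm20 ▸ hsq)
        simpa [Real.sqrt_sq_eq_abs, Real.sqrt_zero] using h1
      have hneg : Tendsto (fun x => -|deriv ω x|) atBot (𝓝 0) := by
        simpa using habs.neg
      exact tendsto_of_tendsto_of_tendsto_of_le_of_le hneg habs
        (fun x => neg_abs_le _) (fun x => le_abs_self _)
    have hfL : f L = 0 := by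
      by_contra h
      obtain ⟨c, hc⟩ : ∃ c : ℝ, c = |f L| := ⟨_, rfl⟩
      have hc0 : 0 < c := by rw [hc]; exact abs_pos.2 h
      have h1 : ∀ᶠ x in atBot, |f (ω x) - f L| < c / 2 := by
        have h2 : Tendsto (fun x => f (ω x)) atBot (𝓝 (f L)) :=
          (hfcont.tendsto L).comp hconv
        have := Metric.tendsto_nhds.1 h2 (c / 2) (by positivity)
        simpa [Real.dist_eq] using this
      have h3 : ∀ᶠ x in atBot, |deriv ω x| < c / 8 := by
        have := Metric.tendsto_nhds.1 hd0 (c / 8) (by positivity)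
        simpa [Real.dist_eq] using this
      obtain ⟨X2, hX2⟩ := eventually_atBot.1 (h1.and h3)
      obtain ⟨x, hx⟩ : ∃ x : ℝ, x = min X2 (-1 : ℝ) - 1 := ⟨_, rfl⟩
      have hx1 : x ≤ X2 := by
        rw [hx]; have := min_le_left X2 (-1 : ℝ); linarith
      have hx2 : x + 1 ≤ X2 := by
        rw [hx]; have := min_le_left X2 (-1 : ℝ); linarith
      have hx3 : x + 1 ≤ -1 := by
        rw [hx]; have := min_le_right X2 (-1 : ℝ); linarith
      have hcd : ContinuousOn (deriv ω) (Icc x (x + 1)) := fun z hz =>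
        (hω'cont z (by linarith [hz.2] : z < 0)).continuousWithinAt
      obtain ⟨ξ, hξ, hξeq⟩ := exists_hasDerivAt_eq_slope (deriv ω) (fun z => -(f (ω z)))
        (by linarith : x < x + 1) hcd
        (fun z hz => hODE z (by linarith [hz.2] : z < 0))
      have hξX : ξ ≤ X2 := le_trans hξ.2.le hx2
      have h4 : c / 2 < |f (ω ξ)| := by
        have h5 : |f (ω ξ) - f L| < c / 2 := (hX2 ξ hξX).1
        have h6 : c ≤ |f L - f (ω ξ)| + |f (ω ξ)| := by
          rw [hc]
          calc |f L| = |(f L - f (ω ξ)) + f (ω ξ)| := by ring_nf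
            _ ≤ |f L - f (ω ξ)| + |f (ω ξ)| := abs_add_le _ _
        rw [abs_sub_comm] at h5
        linarith
      have h7 : |deriv ω (x + 1)| < c / 8 := (hX2 (x + 1) hx2).2
      have h8 : |deriv ω x| < c / 8 := (hX2 x hx1).2
      have h9 : |(-(f (ω ξ)))| < c / 4 := by
        rw [hξeq]
        have h10 : (x + 1) - x = 1 := by ring
        rw [h10, div_one]
        calc |deriv ω (x + 1) - deriv ω x| ≤ |deriv ω (x + 1)| + |deriv ω x| :=
            abs_sub _ _
          _ < c / 4 := by linarith
      rw [abs_neg] at h9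
      linarith
    exact hfzero L (lt_of_lt_of_le hθ0 hLθ) hfL
  -- Dichotomy on zeros of the derivative
  by_cases hz : ∀ X ≤ ty, ∃ q ≤ X, deriv ω q = 0
  · -- zeros of ω' are unbounded below
    obtain ⟨x₀, hx₀y, hx₀0⟩ := hz ty le_rfl
    have hzθ : θF < ω x₀ := hθlt x₀ hx₀y
    have hFzE : F (ω x₀) = E := by
      have h1 := heng2 x₀ hx₀y
      rw [hx₀0] at h1
      norm_num at h1
      linarith
    -- all values of ω at zeros of ω' coincide
    have main : ∀ u v : ℝ, θF < u → u < v → F u = E → F v = E →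
        (∃ r ≤ ty, ω r = u) → (∃ r ≤ ty, ω r = v) → False := by
      rintro u v h1 h2 h3 h4 ⟨r1, hr1, hru⟩ ⟨r2, hr2, hrv⟩
      have huα : u < α := by
        by_contra hcon
        push_neg at hcon
        have := hFanti (mem_Ici.2 hcon) (mem_Ici.2 (le_trans hcon h2.le)) h2
        rw [h3, h4] at this
        exact lt_irrefl E this
      have hvα : α < v := by
        by_contra hcon
        push_neg at hcon
        have := hFmono ⟨by linarith, huα.le⟩ ⟨by linarith, hcon⟩ h2
        rw [h3, h4] at this
        exact lt_irrefl E this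
      have hFα : E < F α := by
        have := hFmono ⟨by linarith, huα.le⟩ ⟨by linarith [hθ0, hθα], le_refl α⟩ huα
        rw [h3] at this
        exact this
      have hmem : α ∈ uIcc (ω r1) (ω r2) := by
        rw [hru, hrv]
        exact mem_uIcc.2 (Or.inl ⟨huα.le, hvα.le⟩)
      obtain ⟨r, hr, hrα⟩ := intermediate_value_uIcc hωcont.continuousOn hmem
      have hrty : r ≤ ty := by
        rcases mem_uIcc.1 hr with h | h
        · exact le_trans h.2 hr2
        · exact le_trans h.2 hr1
      have := hFle r hrty
      rw [hrα] at this
      linarith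
    have huniq : ∀ q ≤ ty, deriv ω q = 0 → ω q = ω x₀ := by
      intro q hq hq0
      have hFq : F (ω q) = E := by
        have h1 := heng2 q hq
        rw [hq0] at h1
        norm_num at h1
        linarith
      by_contra hne
      rcases lt_or_gt_of_ne hne with h | h
      · exact main (ω q) (ω x₀) (hθlt q hq) h hFq hFzE ⟨q, hq, rfl⟩ ⟨x₀, hx₀y, rfl⟩
      · exact main (ω x₀) (ω q) hzθ h hFzE hFq ⟨x₀, hx₀y, rfl⟩ ⟨q, hq, rfl⟩
    -- ω converges to ω x₀ at -∞
    have hconv : Tendsto ω atBot (𝓝 (ω x₀)) := by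
      rw [Metric.tendsto_nhds]
      intro ε hε
      rw [eventually_atBot]
      by_contra hcon
      push_neg at hcon
      obtain ⟨x₁, hx₁, hx₁d⟩ := hcon (x₀ - 1)
      obtain ⟨q, hq, hq0⟩ := hz (x₁ - 1) (by linarith)
      have hqty : q ≤ ty := by linarith
      have hωq : ω q = ω x₀ := huniq q hqty hq0
      have hqx₁ : q < x₁ := by linarith
      have hx₁x₀ : x₁ < x₀ := by linarith
      have hd : ε ≤ |ω x₁ - ω x₀| := by
        rw [Real.dist_eq] at hx₁d
        exact hx₁d
      rcases le_or_gt (ω x₁) (ω x₀) with hcase | hcase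
      · have h7 : ω x₁ ≤ ω x₀ - ε := by
          rcases abs_cases (ω x₁ - ω x₀) with ⟨he, _⟩ | ⟨he, _⟩ <;> rw [he] at hd <;> linarith
        obtain ⟨cc, hcc, hcmin⟩ := (isCompact_Icc (a := q) (b := x₀)).exists_isMinOn
          ⟨q, le_refl q, by linarith⟩ hωcont.continuousOn
        have hccx₁ : ω cc ≤ ω x₀ - ε :=
          le_trans (hcmin ⟨hqx₁.le, hx₁x₀.le⟩) h7
        have hccq : q < cc := by
          rcases eq_or_lt_of_le hcc.1 with h | h
          · exfalso; rw [← h, hωq] at hccx₁; linarith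
          · exact h
        have hccx₀ : cc < x₀ := by
          rcases eq_or_lt_of_le hcc.2 with h | h
          · exfalso; rw [h] at hccx₁; linarith
          · exact h
        have hloc : IsLocalMin ω cc := hcmin.isLocalMin (Icc_mem_nhds hccq hccx₀)
        have hd0 : deriv ω cc = 0 := hloc.deriv_eq_zero
        have := huniq cc (le_trans hcc.2 hx₀y) hd0
        rw [this] at hccx₁
        linarith
      · have h7 : ω x₀ + ε ≤ ω x₁ := by
          rcases abs_cases (ω x₁ - ω x₀) with ⟨he, _⟩ | ⟨he, _⟩ <;> rw [he] at hd <;> linarith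
        obtain ⟨cc, hcc, hcmax⟩ := (isCompact_Icc (a := q) (b := x₀)).exists_isMaxOn
          ⟨q, le_refl q, by linarith⟩ hωcont.continuousOn
        have hccx₁ : ω x₀ + ε ≤ ω cc :=
          le_trans h7 (hcmax ⟨hqx₁.le, hx₁x₀.le⟩)
        have hccq : q < cc := by
          rcases eq_or_lt_of_le hcc.1 with h | h
          · exfalso; rw [← h, hωq] at hccx₁; linarith
          · exact h
        have hccx₀ : cc < x₀ := by
          rcases eq_or_lt_of_le hcc.2 with h | h
          · exfalso; rw [h] at hccx₁; linarith
          · exact h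
        have hloc : IsLocalMax ω cc := hcmax.isLocalMax (Icc_mem_nhds hccq hccx₀)
        have hd0 : deriv ω cc = 0 := hloc.deriv_eq_zero
        have := huniq cc (le_trans hcc.2 hx₀y) hd0
        rw [this] at hccx₁
        linarith
    exact hend (ω x₀) hzθ.le hconv
  · -- zeros of ω' are bounded below: ω is eventually monotone
    push_neg at hz
    obtain ⟨X, hXy, hX⟩ := hz
    have hX0 : X < 0 := lt_of_le_of_lt hXy hy0
    have hcd : ContinuousOn (deriv ω) (Iic X) := fun z hz =>
      (hω'cont z (lt_of_le_of_lt hz hX0)).continuousWithinAt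
    have hsign : (∀ x ≤ X, 0 < deriv ω x) ∨ (∀ x ≤ X, deriv ω x < 0) := by
      rcases lt_or_gt_of_ne (hX X le_rfl) with h | h
      · right
        intro x hx
        rcases lt_or_gt_of_ne (hX x hx) with h1 | h1
        · exact h1
        · exfalso
          have hxX : x < X := by
            rcases eq_or_lt_of_le hx with h2 | h2
            · exfalso; rw [h2] at h1; exact absurd h h1.asymm
            · exact h2
          have hmem : (0 : ℝ) ∈ Icc (deriv ω X) (deriv ω x) := ⟨h.le, h1.le⟩
          obtain ⟨z', hz', hz'0⟩ := intermediate_value_Icc' hxX.le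
            (hcd.mono (Icc_subset_Iic_self)) hmem
          exact hX z' hz'.2 hz'0
      · left
        intro x hx
        rcases lt_or_gt_of_ne (hX x hx) with h1 | h1
        · exfalso
          have hxX : x < X := by
            rcases eq_or_lt_of_le hx with h2 | h2
            · exfalso; rw [h2] at h1; exact absurd h h1.asymm
            · exact h2
          have hmem : (0 : ℝ) ∈ Icc (deriv ω x) (deriv ω X) := ⟨h1.le, h.le⟩
          obtain ⟨z', hz', hz'0⟩ := intermediate_value_Icc hxX.le
            (hcd.mono (Icc_subset_Iic_self)) hmem
          exact hX z' hz'.2 hz'0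
        · exact h1
    rcases hsign with hpos | hneg
    · -- ω strictly increasing on Iic X
      have hmono : StrictMonoOn ω (Iic X) := by
        apply strictMonoOn_of_deriv_pos (convex_Iic X) hωcont.continuousOn
        intro x hx
        rw [interior_Iic, mem_Iio] at hx
        exact hpos x hx.le
      obtain ⟨L, hL⟩ : ∃ L : ℝ, L = sInf (ω '' Iic X) := ⟨_, rfl⟩
      have hne : (ω '' Iic X).Nonempty := ⟨ω X, X, le_refl X, rfl⟩
      have hbdd2 : BddBelow (ω '' Iic X) := by
        refine ⟨θF, ?_⟩
        rintro w ⟨x, hx, rfl⟩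
        exact (hθlt x (le_trans hx hXy)).le
      have hLθ : θF ≤ L := by
        rw [hL]
        refine le_csInf hne ?_
        rintro w ⟨x, hx, rfl⟩
        exact (hθlt x (le_trans hx hXy)).le
      have hconv : Tendsto ω atBot (𝓝 L) := by
        rw [Metric.tendsto_nhds]
        intro ε hε
        rw [eventually_atBot]
        have hlt : L < L + ε := by linarith
        obtain ⟨w, hwmem, hw⟩ := exists_lt_of_csInf_lt hne (hL ▸ hlt)
        obtain ⟨x', hx', rfl⟩ := hwmem
        refine ⟨x', fun x hx => ?_⟩
        have h8 : ω x ≤ ω x' := hmono.monotoneOn (mem_Iic.2 (le_trans hx hx'))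
          (mem_Iic.2 hx') hx
        have h9 : L ≤ ω x := by
          rw [hL]
          exact csInf_le hbdd2 ⟨x, le_trans hx hx', rfl⟩
        rw [Real.dist_eq, abs_lt]
        constructor <;> linarith
      exact hend L hLθ hconv
    · -- ω strictly decreasing on Iic X
      have hmono : StrictAntiOn ω (Iic X) := by
        apply strictAntiOn_of_deriv_neg (convex_Iic X) hωcont.continuousOn
        intro x hx
        rw [interior_Iic, mem_Iio] at hx
        exact hneg x hx.le
      obtain ⟨L, hL⟩ : ∃ L : ℝ, L = sSup (ω '' Iic X) := ⟨_, rfl⟩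
      have hne : (ω '' Iic X).Nonempty := ⟨ω X, X, le_refl X, rfl⟩
      have hbdd2 : BddAbove (ω '' Iic X) := by
        refine ⟨M, ?_⟩
        rintro w ⟨x, hx, rfl⟩
        exact le_trans (le_abs_self _) (hM x)
      have hLθ : θF ≤ L := by
        rw [hL]
        exact le_trans (hθlt X hXy).le (le_csSup hbdd2 ⟨X, le_refl X, rfl⟩)
      have hconv : Tendsto ω atBot (𝓝 L) := by
        rw [Metric.tendsto_nhds]
        intro ε hε
        rw [eventually_atBot]
        have hlt : L - ε < L := by linarith
        obtain ⟨w, hwmem, hw⟩ := exists_lt_of_lt_csSup hne (hL ▸ hlt)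
        obtain ⟨x', hx', rfl⟩ := hwmem
        refine ⟨x', fun x hx => ?_⟩
        have h8 : ω x' ≤ ω x := hmono.antitoneOn (mem_Iic.2 (le_trans hx hx'))
          (mem_Iic.2 hx') hx
        have h9 : ω x ≤ L := by
          rw [hL]
          exact le_csSup hbdd2 ⟨x, le_trans hx hx', rfl⟩
        rw [Real.dist_eq, abs_lt]
        constructor <;> linarith
      exact hend L hLθ hconv
end

section
/- Assume b1 > d1, b2 > d2, γ^F > 0 and γ^U < 0. Define H(ω) = (F^F(ω) − F^U(ω)) − ( F^F(K1^F(1 − d1/b1)) − F^U(−K2^U(1 − d2/b2)) ). Then H(K1^F(1 − d1/b1)) > 0, H(−K2^U(1 − d2/b2)) < 0, and H has exactly one zero in the open interval (−K2^U(1 − d2/b2), K1^F(1 − d1/b1)). -/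
open Filter

lemma hasDerivAt_max_pow (n : ℕ) (hn : 2 ≤ n) (x : ℝ) :
    HasDerivAt (fun y : ℝ => max y 0 ^ n) (n * max x 0 ^ (n - 1)) x := by
  rcases lt_trichotomy x 0 with hx | rfl | hx
  · have h : (fun y : ℝ => max y 0 ^ n) =ᶠ[nhds x] fun _ => 0 := by
      filter_upwards [Iio_mem_nhds hx] with y hy
      simp only [Set.mem_Iio] at hy
      simp [max_eq_right hy.le, zero_pow (by omega : n ≠ 0)]
    have h2 := (hasDerivAt_const x (0:ℝ)).congr_of_eventuallyEq h
    simpa [max_eq_right hx.le, zero_pow (by omega : n - 1 ≠ 0)] using h2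
  · rw [hasDerivAt_iff_tendsto_slope]
    have hb : ∀ y : ℝ, ‖slope (fun y : ℝ => max y 0 ^ n) 0 y‖ ≤ |y| ^ (n - 1) := by
      intro y
      rcases le_or_gt y 0 with hy | hy
      · simp only [slope, max_eq_right hy, max_self, zero_pow (by omega : n ≠ 0)]
        simp [abs_nonneg, pow_nonneg]
      · have : slope (fun y : ℝ => max y 0 ^ n) 0 y = y ^ (n-1) := by
          simp only [slope_def_field, max_eq_left hy.le, max_self, zero_pow (by omega : n ≠ 0), sub_zero]
          field_simp
          rw [← pow_succ', Nat.sub_add_cancel (by omega)]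
        rw [this, Real.norm_eq_abs, abs_pow]
    have hg : Tendsto (fun y : ℝ => |y| ^ (n-1)) (nhdsWithin 0 {(0:ℝ)}ᶜ) (nhds 0) := by
      have := (((continuous_abs : Continuous fun y : ℝ => |y|).pow (n-1)).tendsto 0)
      simp only [Pi.pow_apply, abs_zero, zero_pow (by omega : n - 1 ≠ 0)] at this
      exact this.mono_left nhdsWithin_le_nhds
    have := squeeze_zero_norm hb hg
    simpa [zero_pow (by omega : n - 1 ≠ 0)] using this
  · have h : (fun y : ℝ => max y 0 ^ n) =ᶠ[nhds x] fun y => y ^ n := by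
      filter_upwards [Ioi_mem_nhds hx] with y hy
      simp only [Set.mem_Ioi] at hy
      simp [max_eq_left hy.le]
    have h2 := (hasDerivAt_pow n x).congr_of_eventuallyEq h
    simpa [max_eq_left hx.le] using h2

lemma hasDerivAt_maxneg_pow (n : ℕ) (hn : 2 ≤ n) (x : ℝ) :
    HasDerivAt (fun y : ℝ => max (-y) 0 ^ n) (-(n * max (-x) 0 ^ (n - 1))) x := by
  have h := (hasDerivAt_max_pow n hn (-x)).comp x (hasDerivAt_neg x)
  simpa [mul_comm, Function.comp_def] using h

lemma potential_closed (b1 d1 b2 d2 K1 K2 : ℝ) (hK1 : K1 ≠ 0) (hK2 : K2 ≠ 0) (w : ℝ) :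
    reactionPotential b1 d1 b2 d2 K1 K2 w =
      (b1 - d1)/2 * max w 0 ^ 2 - b1/(3*K1) * max w 0 ^ 3
      + (b2 - d2)/2 * max (-w) 0 ^ 2 - b2/(3*K2) * max (-w) 0 ^ 3 := by
  have hderiv : ∀ x : ℝ, HasDerivAt (fun w : ℝ =>
      (b1 - d1)/2 * max w 0 ^ 2 - b1/(3*K1) * max w 0 ^ 3
      + (b2 - d2)/2 * max (-w) 0 ^ 2 - b2/(3*K2) * max (-w) 0 ^ 3)
      (reactionTerm b1 d1 b2 d2 K1 K2 x) x := by
    intro x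
    have h := (((hasDerivAt_max_pow 2 le_rfl x).const_mul ((b1-d1)/2)).sub
      ((hasDerivAt_max_pow 3 (by norm_num) x).const_mul (b1/(3*K1)))).add
      ((((hasDerivAt_maxneg_pow 2 le_rfl x).const_mul ((b2-d2)/2)).sub
      ((hasDerivAt_maxneg_pow 3 (by norm_num) x).const_mul (b2/(3*K2)))))
    have heq : reactionTerm b1 d1 b2 d2 K1 K2 x =
        (b1-d1)/2 * (2 * max x 0 ^ (2-1)) - b1/(3*K1) * (3 * max x 0 ^ (3-1))
        + ((b2-d2)/2 * (-(2 * max (-x) 0 ^ (2-1))) - b2/(3*K2) * (-(3 * max (-x) 0 ^ (3-1)))) := by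
      unfold reactionTerm
      field_simp
      ring
    rw [heq]
    refine (h.congr_deriv ?_).congr_of_eventuallyEq (Filter.Eventually.of_forall fun y => ?_)
    · push_cast
      ring
    · simp only [Pi.add_apply, Pi.sub_apply]
      ring
  have hcont : Continuous (reactionTerm b1 d1 b2 d2 K1 K2) := by
    unfold reactionTerm; fun_prop
  have key := intervalIntegral.integral_eq_sub_of_hasDerivAt
    (f := fun w : ℝ => (b1 - d1)/2 * max w 0 ^ 2 - b1/(3*K1) * max w 0 ^ 3
      + (b2 - d2)/2 * max (-w) 0 ^ 2 - b2/(3*K2) * max (-w) 0 ^ 3)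
    (fun x _ => hderiv x) (hcont.intervalIntegrable 0 w)
  unfold reactionPotential
  rw [key]
  norm_num

lemma peak_val (b d m : ℝ) (hb : b ≠ 0) (hm : m ≠ 0) :
    (b-d)/2*(m*(1-d/b))^2 - b/(3*m)*(m*(1-d/b))^3 = (b-d)*m^2*(1-d/b)^2/6 := by
  field_simp
  ring

lemma peak_val_neg (b d m : ℝ) (hb : b ≠ 0) (hm : m ≠ 0) :
    (b-d)/2*(-(m*(1-d/b)))^2 + b/(3*m)*(-(m*(1-d/b)))^3 = (b-d)*m^2*(1-d/b)^2/6 := by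
  field_simp
  ring

lemma peak_bound (b d m x : ℝ) (hb : 0 < b) (hdb : d < b) (hm : 0 < m) (hx : 0 ≤ x) :
    (b-d)/2*x^2 - b/(3*m)*x^3 ≤ (b-d)*m^2*(1-d/b)^2/6 := by
  rw [← sub_nonneg]
  have key : (b-d)*m^2*(1-d/b)^2/6 - ((b-d)/2*x^2 - b/(3*m)*x^3)
      = b*(m*(1-d/b) - x)^2*(m*(1-d/b) + 2*x) / (6*m) := by
    field_simp
    ring
  rw [key]
  have h1 : 0 < 1 - d/b := by
    rw [sub_pos, div_lt_one hb]; exact hdb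
  have h2 : 0 ≤ m*(1-d/b) + 2*x := by nlinarith
  have h3 : 0 ≤ b*(m*(1-d/b) - x)^2 := by positivity
  have h4 : 0 < 6*m := by linarith
  exact div_nonneg (mul_nonneg h3 h2) h4.le

lemma peak_bound_neg (b d m x : ℝ) (hb : 0 < b) (hdb : d < b) (hm : 0 < m) (hx : x ≤ 0) :
    (b-d)/2*x^2 + b/(3*m)*x^3 ≤ (b-d)*m^2*(1-d/b)^2/6 := by
  have h := peak_bound b d m (-x) hb hdb hm (neg_nonneg.2 hx)
  have h2 : (b-d)/2*(-x)^2 - b/(3*m)*(-x)^3 = (b-d)/2*x^2 + b/(3*m)*x^3 := by ring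
  linarith [h2 ▸ h]

/-- The matching function
`H(ω) = (F^F(ω) - F^U(ω)) - (F^F(K1^F(1-d1/b1)) - F^U(-K2^U(1-d2/b2)))`. -/
noncomputable def matchingH (b1 d1 b2 d2 K1F K1U K2F K2U : ℝ) (w : ℝ) : ℝ :=
  (reactionPotential b1 d1 b2 d2 K1F K2F w - reactionPotential b1 d1 b2 d2 K1U K2U w)
    - (reactionPotential b1 d1 b2 d2 K1F K2F (K1F * (1 - d1 / b1))
        - reactionPotential b1 d1 b2 d2 K1U K2U (-(K2U * (1 - d2 / b2))))

set_option maxHeartbeats 2000000 in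
/-- under `γ^F > 0` and `γ^U < 0`, the function `H` is positive at
`K1^F(1-d1/b1)`, negative at `-K2^U(1-d2/b2)`, and has exactly one zero in between. -/
theorem stmt12 (b1 b2 d1 d2 K1F K1U K2F K2U : ℝ)
    (hb1 : 0 < b1) (hb2 : 0 < b2) (hd1 : 0 < d1) (hd2 : 0 < d2)
    (hK1F : 0 < K1F) (hK1U : 0 < K1U) (hK2F : 0 < K2F) (hK2U : 0 < K2U)
    (hbd1 : d1 < b1) (hbd2 : d2 < b2)
    -- γ^F > 0
    (hγF : 0 < reactionPotential b1 d1 b2 d2 K1F K2F (K1F * (1 - d1 / b1))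
            - reactionPotential b1 d1 b2 d2 K1F K2F (-(K2F * (1 - d2 / b2))))
    -- γ^U < 0
    (hγU : reactionPotential b1 d1 b2 d2 K1U K2U (K1U * (1 - d1 / b1))
            - reactionPotential b1 d1 b2 d2 K1U K2U (-(K2U * (1 - d2 / b2))) < 0) :
    0 < matchingH b1 d1 b2 d2 K1F K1U K2F K2U (K1F * (1 - d1 / b1)) ∧
    matchingH b1 d1 b2 d2 K1F K1U K2F K2U (-(K2U * (1 - d2 / b2))) < 0 ∧
    ∃! z : ℝ, z ∈ Set.Ioo (-(K2U * (1 - d2 / b2))) (K1F * (1 - d1 / b1)) ∧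
      matchingH b1 d1 b2 d2 K1F K1U K2F K2U z = 0 := by
  have hs : 0 < 1 - d1/b1 := by rw [sub_pos, div_lt_one hb1]; exact hbd1
  have ht : 0 < 1 - d2/b2 := by rw [sub_pos, div_lt_one hb2]; exact hbd2
  set a : ℝ := K1F * (1 - d1/b1) with ha_def
  set bb : ℝ := -(K2U * (1 - d2/b2)) with hbb_def
  have ha : 0 < a := mul_pos hK1F hs
  have hbb : bb < 0 := neg_neg_iff_pos.mpr (mul_pos hK2U ht)
  have evalpos : ∀ K1 K2 w : ℝ, K1 ≠ 0 → K2 ≠ 0 → 0 ≤ w →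
      reactionPotential b1 d1 b2 d2 K1 K2 w = (b1-d1)/2*w^2 - b1/(3*K1)*w^3 := by
    intro K1 K2 w h1 h2 hw
    rw [potential_closed b1 d1 b2 d2 K1 K2 h1 h2 w, max_eq_left hw,
      max_eq_right (by linarith : -w ≤ 0)]
    ring
  have evalneg : ∀ K1 K2 w : ℝ, K1 ≠ 0 → K2 ≠ 0 → w ≤ 0 →
      reactionPotential b1 d1 b2 d2 K1 K2 w = (b2-d2)/2*w^2 + b2/(3*K2)*w^3 := by
    intro K1 K2 w h1 h2 hw
    rw [potential_closed b1 d1 b2 d2 K1 K2 h1 h2 w, max_eq_right hw,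
      max_eq_left (by linarith : 0 ≤ -w)]
    ring
  set A : ℝ := b1/3 * (1/K1U - 1/K1F) with hA_def
  set B : ℝ := b2/3 * (1/K2F - 1/K2U) with hB_def
  set C : ℝ := ((b1-d1)*K1F^2*(1-d1/b1)^2 - (b2-d2)*K2U^2*(1-d2/b2)^2)/6 with hC_def
  -- closed form for H
  have hH : ∀ w : ℝ, matchingH b1 d1 b2 d2 K1F K1U K2F K2U w
      = A * max w 0 ^ 3 - B * max (-w) 0 ^ 3 - C := by
    intro w
    unfold matchingH
    rw [potential_closed b1 d1 b2 d2 K1F K2F hK1F.ne' hK2F.ne' w,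
      potential_closed b1 d1 b2 d2 K1U K2U hK1U.ne' hK2U.ne' w,
      evalpos K1F K2F _ hK1F.ne' hK2F.ne' ha.le,
      evalneg K1U K2U _ hK1U.ne' hK2U.ne' hbb.le,
      hA_def, hB_def, hC_def, ha_def, hbb_def]
    field_simp
    ring
  -- hypotheses in polynomial form
  have hγF' : (b2-d2)*K2F^2*(1-d2/b2)^2/6 < (b1-d1)*K1F^2*(1-d1/b1)^2/6 := by
    rw [evalpos K1F K2F _ hK1F.ne' hK2F.ne' ha.le,
      evalneg K1F K2F _ hK1F.ne' hK2F.ne' (by nlinarith : -(K2F*(1-d2/b2)) ≤ 0),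
      ha_def, peak_val b1 d1 K1F hb1.ne' hK1F.ne',
      peak_val_neg b2 d2 K2F hb2.ne' hK2F.ne'] at hγF
    linarith
  have hγU' : (b1-d1)*K1U^2*(1-d1/b1)^2/6 < (b2-d2)*K2U^2*(1-d2/b2)^2/6 := by
    rw [evalpos K1U K2U _ hK1U.ne' hK2U.ne' (by positivity : (0:ℝ) ≤ K1U*(1-d1/b1)),
      evalneg K1U K2U _ hK1U.ne' hK2U.ne' hbb.le, hbb_def,
      peak_val b1 d1 K1U hb1.ne' hK1U.ne',
      peak_val_neg b2 d2 K2U hb2.ne' hK2U.ne'] at hγU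
    linarith
  -- value of H at a
  have hHa : 0 < A*a^3 - C := by
    have e1 : A*a^3 - C = (b2-d2)*K2U^2*(1-d2/b2)^2/6
        - ((b1-d1)/2*a^2 - b1/(3*K1U)*a^3) := by
      rw [hA_def, hC_def, ha_def]
      field_simp
      ring
    have hpb := peak_bound b1 d1 K1U a hb1 hbd1 hK1U ha.le
    rw [e1]
    linarith
  -- value of H at bb
  have hHb : B*bb^3 - C < 0 := by
    have e2 : B*bb^3 - C = ((b2-d2)/2*bb^2 + b2/(3*K2F)*bb^3)
        - (b1-d1)*K1F^2*(1-d1/b1)^2/6 := by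
      rw [hB_def, hC_def, hbb_def]
      field_simp
      ring
    have hpb := peak_bound_neg b2 d2 K2F bb hb2 hbd2 hK2F hbb.le
    rw [e2]
    linarith
  have hHa' : 0 < matchingH b1 d1 b2 d2 K1F K1U K2F K2U a := by
    rw [hH a, max_eq_left ha.le, max_eq_right (by linarith : -a ≤ 0)]
    calc (0:ℝ) < A*a^3 - C := hHa
    _ = A * a ^ 3 - B * 0 ^ 3 - C := by ring
  have hHb' : matchingH b1 d1 b2 d2 K1F K1U K2F K2U bb < 0 := by
    rw [hH bb, max_eq_right hbb.le, max_eq_left (by linarith : 0 ≤ -bb)]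
    calc A * 0 ^ 3 - B * (-bb) ^ 3 - C = B*bb^3 - C := by ring
    _ < 0 := hHb
  refine ⟨hHa', hHb', ?_⟩
  -- continuity
  have hcont : Continuous (matchingH b1 d1 b2 d2 K1F K1U K2F K2U) := by
    have : matchingH b1 d1 b2 d2 K1F K1U K2F K2U
        = fun w => A * max w 0 ^ 3 - B * max (-w) 0 ^ 3 - C := funext hH
    rw [this]
    fun_prop
  have hsub := intermediate_value_Ioo (le_of_lt (hbb.trans ha)) hcont.continuousOn
  obtain ⟨z, hzmem, hz0⟩ := hsub ⟨hHb', hHa'⟩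
  have cube_mono : StrictMono (fun x : ℝ => x ^ 3) := Odd.strictMono_pow ⟨1, by norm_num⟩
  -- facts about any zero
  have fpos : ∀ u : ℝ, 0 ≤ u → u < a → matchingH b1 d1 b2 d2 K1F K1U K2F K2U u = 0 →
      0 < A ∧ A*u^3 = C := by
    intro u hu hua h0
    rw [hH u, max_eq_left hu, max_eq_right (by linarith : -u ≤ 0)] at h0
    have hu3 : A*u^3 = C := by nlinarith [h0]
    have hcu : u^3 < a^3 := cube_mono hua
    have hApos : 0 < A := by
      by_contra h
      push_neg at h
      have := mul_le_mul_of_nonpos_left hcu.le h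
      linarith
    exact ⟨hApos, hu3⟩
  have fneg : ∀ u : ℝ, u ≤ 0 → bb < u → matchingH b1 d1 b2 d2 K1F K1U K2F K2U u = 0 →
      0 < B ∧ B*u^3 = C := by
    intro u hu hbu h0
    rw [hH u, max_eq_right hu, max_eq_left (by linarith : 0 ≤ -u)] at h0
    have hu3 : B*u^3 = C := by nlinarith [h0]
    have hcu : bb^3 < u^3 := cube_mono hbu
    have hBpos : 0 < B := by
      by_contra h
      push_neg at h
      have := mul_le_mul_of_nonpos_left hcu.le h
      linarith
    exact ⟨hBpos, hu3⟩
  have key : ∀ y ∈ Set.Ioo bb a, matchingH b1 d1 b2 d2 K1F K1U K2F K2U y = 0 →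
      ∀ y' ∈ Set.Ioo bb a, matchingH b1 d1 b2 d2 K1F K1U K2F K2U y' = 0 → y = y' := by
    intro y hy hy0 y' hy' hy0'
    rcases le_or_gt 0 y with h1 | h1 <;> rcases le_or_gt 0 y' with h2 | h2
    · obtain ⟨hA1, e1⟩ := fpos y h1 hy.2 hy0
      obtain ⟨_, e2⟩ := fpos y' h2 hy'.2 hy0'
      have : y^3 = y'^3 := mul_left_cancel₀ hA1.ne' (e1.trans e2.symm)
      exact cube_mono.injective this
    · obtain ⟨hA1, e1⟩ := fpos y h1 hy.2 hy0
      obtain ⟨hB1, e2⟩ := fneg y' h2.le hy'.1 hy0'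
      have hc1 : 0 ≤ C := e1 ▸ mul_nonneg hA1.le (pow_nonneg h1 3)
      have hy3 : y'^3 < 0 := by
        have := cube_mono h2
        simpa using this
      have hc2 : C < 0 := e2 ▸ mul_neg_of_pos_of_neg hB1 hy3
      linarith
    · obtain ⟨hA1, e1⟩ := fpos y' h2 hy'.2 hy0'
      obtain ⟨hB1, e2⟩ := fneg y h1.le hy.1 hy0
      have hc1 : 0 ≤ C := e1 ▸ mul_nonneg hA1.le (pow_nonneg h2 3)
      have hy3 : y^3 < 0 := by
        have := cube_mono h1
        simpa using this
      have hc2 : C < 0 := e2 ▸ mul_neg_of_pos_of_neg hB1 hy3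
      linarith
    · obtain ⟨hB1, e1⟩ := fneg y h1.le hy.1 hy0
      obtain ⟨_, e2⟩ := fneg y' h2.le hy'.1 hy0'
      have : y^3 = y'^3 := mul_left_cancel₀ hB1.ne' (e1.trans e2.symm)
      exact cube_mono.injective this
  exact ⟨z, ⟨hzmem, hz0⟩, fun y hy => key y hy.1 hy.2 z hzmem hz0⟩
end

section
/- Assume b2 > d2, b3 > d3, b2 > b3 and d3 > d2. Set n̄32 = (d2/b2)·K2(b3 − d3)/d3 and n̄23 = K2(1 − d3/b3) − n̄32. Then n̄32 > 0, n̄23 > 0, and (0, n̄32, n̄23) is an equilibrium of the three-species ODE system, i.e. b2 n̄32 · n̄32/(n̄32 + n̄23) · (1 − (n̄32 + n̄23)/K2) − d2 n̄32 = 0 and b3 n̄23 (1 − (n̄32 + n̄23)/K2) − d3 n̄23 = 0 (and the first equation is trivially satisfied at n1 = 0). -/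
/-- Right-hand side of the `n1` equation of the three-species system. -/
noncomputable def W1 (b1 d1 K1 c : ℝ) (n1 n2 n3 : ℝ) : ℝ :=
  b1 * n1 * (1 - n1 / K1) - c * n1 * (n2 + n3) - d1 * n1

/-- Right-hand side of the `n2` (wild mosquitoes) equation of the three-species system. -/
noncomputable def W2 (b2 d2 K2 c : ℝ) (n1 n2 n3 : ℝ) : ℝ :=
  b2 * n2 * (n2 / (n2 + n3)) * (1 - (n2 + n3) / K2) - c * n1 * n2 - d2 * n2

/-- Right-hand side of the `n3` (Wolbachia-infected) equation of the three-species system. -/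
noncomputable def W3 (b3 d3 K2 c : ℝ) (n1 n2 n3 : ℝ) : ℝ :=
  b3 * n3 * (1 - (n2 + n3) / K2) - c * n1 * n3 - d3 * n3

/-- `(0, n̄32, n̄23)` with `n̄32 = (d2/b2)·K2(b3-d3)/d3` and
`n̄23 = K2(1 - d3/b3) - n̄32` is an equilibrium of the three-species system with positive
`n̄32, n̄23`. -/
theorem stmt16 (b1 b2 b3 d1 d2 d3 K1 K2 c : ℝ)
    (hb1 : 0 < b1) (hb2 : 0 < b2) (hb3 : 0 < b3)
    (hd1 : 0 < d1) (hd2 : 0 < d2) (hd3 : 0 < d3)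
    (hK1 : 0 < K1) (hK2 : 0 < K2) (hc : 0 < c)
    (hbd2 : d2 < b2) (hbd3 : d3 < b3) (hb23 : b3 < b2) (hd23 : d2 < d3) :
    0 < (d2 / b2) * (K2 * (b3 - d3) / d3) ∧
    0 < K2 * (1 - d3 / b3) - (d2 / b2) * (K2 * (b3 - d3) / d3) ∧
    W1 b1 d1 K1 c 0 ((d2 / b2) * (K2 * (b3 - d3) / d3))
      (K2 * (1 - d3 / b3) - (d2 / b2) * (K2 * (b3 - d3) / d3)) = 0 ∧
    W2 b2 d2 K2 c 0 ((d2 / b2) * (K2 * (b3 - d3) / d3))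
      (K2 * (1 - d3 / b3) - (d2 / b2) * (K2 * (b3 - d3) / d3)) = 0 ∧
    W3 b3 d3 K2 c 0 ((d2 / b2) * (K2 * (b3 - d3) / d3))
      (K2 * (1 - d3 / b3) - (d2 / b2) * (K2 * (b3 - d3) / d3)) = 0 := by
  have hb2' := hb2.ne'
  have hb3' := hb3.ne'
  have hd3' := hd3.ne'
  have hK2' := hK2.ne'
  have hbd3' : 0 < b3 - d3 := by linarith
  have hbd3'' : b3 - d3 ≠ 0 := hbd3'.ne'
  have h32 : 0 < (d2 / b2) * (K2 * (b3 - d3) / d3) := by positivity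
  have hsum : (d2 / b2) * (K2 * (b3 - d3) / d3) +
      (K2 * (1 - d3 / b3) - (d2 / b2) * (K2 * (b3 - d3) / d3)) = K2 * (b3 - d3) / b3 := by
    field_simp; ring
  have hsumpos : (0:ℝ) < K2 * (b3 - d3) / b3 := by positivity
  refine ⟨h32, ?_, ?_, ?_, ?_⟩
  · have h23 : K2 * (1 - d3 / b3) - (d2 / b2) * (K2 * (b3 - d3) / d3)
        = K2 * (b3 - d3) * (b2 * d3 - b3 * d2) / (b3 * (b2 * d3)) := by
      field_simp
    rw [h23]
    have : 0 < b2 * d3 - b3 * d2 := by nlinarith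
    positivity
  · simp [W1]
  · simp only [W2, hsum, mul_zero, zero_mul, sub_zero]
    field_simp
    ring
  · simp only [W3, hsum, mul_zero, zero_mul, sub_zero]
    field_simp
    ring
end

section
/- Assume b2 > d2, b3 > d3, b2 > b3 and d3 > d2. Set α3 = 1 − d3/b3, n̄32 = (d2/b2)·K2(b3 − d3)/d3 and n̄23 = K2 α3 − n̄32 (so n̄23 > 0 and d2/(b2(1 − α3)) < 1). Let a22 = d2(1 − d2/(b2(1 − α3)²)), a23 = −d2²/(b2(1 − α3)²), a32 = −b3 α3 (1 − d2/(b2(1 − α3))) and a33 = b3 α3 (−1 + d2/(b2(1 − α3))) be the entries of the (n2, n3)-block of the Jacobian of the three-species system at (0, n̄32, n̄23). Then a33 = a32, a22 = d2 + a23, the determinant a22 a33 − a23 a32 equals d2 a33, and d2 a33 < 0; consequently this 2×2 block has a positive eigenvalue and the equilibrium (0, n̄32, n̄23) is linearly unstable. -/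
set_option maxHeartbeats 1000000


/-- algebraic structure of the `(n2,n3)`-block of the Jacobian of the
three-species system at the coexistence equilibrium `(0, n̄32, n̄23)`: `a33 = a32`,
`a22 = d2 + a23`, its determinant equals `d2·a33 < 0`, hence the block has a positive
eigenvalue and the equilibrium is linearly unstable. -/
theorem stmt18 (b1 b2 b3 d1 d2 d3 K1 K2 c : ℝ)
    (hb1 : 0 < b1) (hb2 : 0 < b2) (hb3 : 0 < b3)
    (hd1 : 0 < d1) (hd2 : 0 < d2) (hd3 : 0 < d3)
    (hK1 : 0 < K1) (hK2 : 0 < K2) (hc : 0 < c)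
    (hbd2 : d2 < b2) (hbd3 : d3 < b3) (hb23 : b3 < b2) (hd23 : d2 < d3)
    (α3 n32 n23 a22 a23 a32 a33 : ℝ)
    (hα3 : α3 = 1 - d3 / b3)
    (hn32 : n32 = (d2 / b2) * (K2 * (b3 - d3) / d3))
    (hn23 : n23 = K2 * α3 - n32)
    (ha22 : a22 = d2 * (1 - d2 / (b2 * (1 - α3) ^ 2)))
    (ha23 : a23 = -(d2 ^ 2 / (b2 * (1 - α3) ^ 2)))
    (ha32 : a32 = -(b3 * α3 * (1 - d2 / (b2 * (1 - α3)))))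
    (ha33 : a33 = b3 * α3 * (-1 + d2 / (b2 * (1 - α3)))) :
    -- n̄23 > 0 and d2/(b2(1 - α3)) < 1
    0 < n23 ∧ d2 / (b2 * (1 - α3)) < 1 ∧
    -- the stated algebraic identities
    a33 = a32 ∧ a22 = d2 + a23 ∧
    a22 * a33 - a23 * a32 = d2 * a33 ∧ d2 * a33 < 0 ∧
    -- the 2×2 block has a positive eigenvalue: linear instability of (0, n̄32, n̄23)
    (∃ μ : ℝ, 0 < μ ∧ ∃ v : Fin 2 → ℝ, v ≠ 0 ∧ (!![a22, a23; a32, a33]).mulVec v = μ • v) := by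
  have hb2' : b2 ≠ 0 := ne_of_gt hb2
  have hb3' : b3 ≠ 0 := ne_of_gt hb3
  have hd3' : d3 ≠ 0 := ne_of_gt hd3
  have h1α : 1 - α3 = d3 / b3 := by rw [hα3]; ring
  have h1αpos : 0 < 1 - α3 := by rw [h1α]; positivity
  have hα3pos : 0 < α3 := by
    rw [hα3]
    have : d3 / b3 < 1 := (div_lt_one hb3).mpr hbd3
    linarith
  have hrlt : d2 / (b2 * (1 - α3)) < 1 := by
    rw [h1α]
    rw [div_lt_one (by positivity)]
    have : d2 * b3 < b2 * d3 := by nlinarith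
    have e : b2 * (d3 / b3) = b2 * d3 / b3 := by ring
    rw [e, lt_div_iff₀ hb3]
    nlinarith
  have hrlt' : d2 / (b2 * (1 - α3)) < 1 := hrlt
  have hn23pos : 0 < n23 := by
    have e : n23 = K2 * (b3 - d3) * (b2 * d3 - d2 * b3) / (b3 * b2 * d3) := by
      rw [hn23, hn32, hα3]; field_simp
    rw [e]
    apply div_pos
    · apply mul_pos (mul_pos hK2 (by linarith)) (by nlinarith)
    · positivity
  have heq1 : a33 = a32 := by rw [ha32, ha33]; ring
  have heq2 : a22 = d2 + a23 := by rw [ha22, ha23]; ring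
  have hdet : a22 * a33 - a23 * a32 = d2 * a33 := by
    rw [heq2, ← heq1]; ring
  have ha33neg : a33 < 0 := by
    rw [ha33]
    have h1 : 0 < b3 * α3 := by positivity
    have h2 : -1 + d2 / (b2 * (1 - α3)) < 0 := by linarith
    exact mul_neg_of_pos_of_neg h1 h2
  have hDneg : d2 * a33 < 0 := mul_neg_of_pos_of_neg hd2 ha33neg
  refine ⟨hn23pos, hrlt, heq1, heq2, hdet, hDneg, ?_⟩
  obtain ⟨s, hs⟩ : ∃ s : ℝ, s = (a22 + a33) ^ 2 - 4 * (d2 * a33) := ⟨_, rfl⟩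
  have hs0 : (0:ℝ) ≤ s := by rw [hs]; nlinarith
  have hsq : Real.sqrt s ^ 2 = s := Real.sq_sqrt hs0
  obtain ⟨μ, hμ⟩ : ∃ μ : ℝ, μ = ((a22 + a33) + Real.sqrt s) / 2 := ⟨_, rfl⟩
  have hsgt : |a22 + a33| < Real.sqrt s := by
    have h1 : Real.sqrt ((a22 + a33) ^ 2) < Real.sqrt s := by
      apply Real.sqrt_lt_sqrt (sq_nonneg _)
      rw [hs]; linarith
    rwa [Real.sqrt_sq_eq_abs] at h1
  have hμpos : 0 < μ := by
    have h2 : -(a22 + a33) < Real.sqrt s :=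
      lt_of_le_of_lt (by linarith [neg_abs_le (a22 + a33)]) hsgt
    rw [hμ]; linarith
  have hchar : μ ^ 2 - (a22 + a33) * μ + (a22 * a33 - a23 * a32) = 0 := by
    rw [hμ]
    linear_combination (1/4 : ℝ) * hsq + (1/4 : ℝ) * hs + hdet
  have ha23neg : a23 < 0 := by
    rw [ha23]
    have : 0 < d2 ^ 2 / (b2 * (1 - α3) ^ 2) := by positivity
    linarith
  refine ⟨μ, hμpos, ![a23, μ - a22], ?_, ?_⟩
  · intro hv
    have := congrFun hv 0
    simp at this
    linarith
  · funext i
    fin_cases i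
    · simp [Matrix.mulVec, dotProduct, Fin.sum_univ_two]
      ring
    · simp [Matrix.mulVec, dotProduct, Fin.sum_univ_two]
      linear_combination (-1 : ℝ) * hchar
end

section
/- Assume b1 > d1, b2 > d2, b3 > d3, b2 > b3 and d2 < d3. Then g_{12}^F(ω) < g_{13}^F(ω) for all ω ∈ (−K2^F, 0), g_{12}^U(ω) < g_{13}^U(ω) for all ω ∈ (−K2^U, 0), and the constants satisfy γ_{12}^F < γ_{13}^F and γ_{12}^U < γ_{13}^U. -/
/-- The reduced reaction term `g_{1i}^S` for the competition of species 1 against species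
`i ∈ {2,3}` (with birth rate `bi`, death rate `di`) in a region with carrying capacities
`K1, K2`:
`g(ω) = b1 ω₊ (1 - ω₊/K1) - d1 ω₊ - ω₋ ( bi (1 - ω₋/K2) - di )`. -/
noncomputable def gRed (b1 d1 bi di K1 K2 : ℝ) (w : ℝ) : ℝ :=
  b1 * max w 0 * (1 - max w 0 / K1) - d1 * max w 0
    - max (-w) 0 * (bi * (1 - max (-w) 0 / K2) - di)

/-- The antiderivative `G_{1i}^S(ω) = ∫₀^ω g_{1i}^S(ζ) dζ`. -/
noncomputable def GRed (b1 d1 bi di K1 K2 : ℝ) (w : ℝ) : ℝ :=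
  ∫ z in (0:ℝ)..w, gRed b1 d1 bi di K1 K2 z

/-- The constant `γ_{1i}^S = G_{1i}^S(K1(1 - d1/b1)) - G_{1i}^S(-K2(1 - di/bi))`. -/
noncomputable def γRed (b1 d1 bi di K1 K2 : ℝ) : ℝ :=
  GRed b1 d1 bi di K1 K2 (K1 * (1 - d1 / b1))
    - GRed b1 d1 bi di K1 K2 (-(K2 * (1 - di / bi)))

lemma gRed_pt (b1 b2 b3 d1 d2 d3 K1 K2 : ℝ) (hK2 : 0 < K2)
    (hb23 : b3 < b2) (hd23 : d2 < d3) (w : ℝ) (hw : w ∈ Set.Ioo (-K2) (0:ℝ)) :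
    gRed b1 d1 b2 d2 K1 K2 w < gRed b1 d1 b3 d3 K1 K2 w := by
  obtain ⟨hw1, hw2⟩ := hw
  have h0 : max w 0 = 0 := max_eq_right hw2.le
  have h1 : max (-w) 0 = -w := max_eq_left (by linarith)
  have hfrac : 0 < 1 - (-w) / K2 := by
    rw [sub_pos, div_lt_one hK2]; linarith
  simp only [gRed, h0, h1]
  nlinarith [mul_pos (by linarith : (0:ℝ) < -w) hfrac,
    mul_pos (by linarith : (0:ℝ) < -w) (by linarith : (0:ℝ) < d3 - d2)]

lemma GRed_neg (b1 d1 bi di K1 K2 a : ℝ) (hK2 : 0 < K2) (ha : 0 ≤ a) :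
    GRed b1 d1 bi di K1 K2 (-a) = bi * a^2 / 2 - bi * a^3 / (3 * K2) - di * a^2 / 2 := by
  have hcong : Set.EqOn (gRed b1 d1 bi di K1 K2)
      (fun z => bi * z + (bi / K2) * z ^ 2 - di * z) (Set.uIcc (0:ℝ) (-a)) := by
    intro z hz
    rw [Set.uIcc_of_ge (by linarith : -a ≤ (0:ℝ))] at hz
    have hz0 : z ≤ 0 := hz.2
    simp only [gRed, max_eq_right hz0, max_eq_left (neg_nonneg.mpr hz0)]
    field_simp
    ring
  have key : ∀ z ∈ Set.uIcc (0:ℝ) (-a),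
      HasDerivAt (fun z => bi * z^2 / 2 + (bi / K2) * z^3 / 3 - di * z^2 / 2)
        (bi * z + (bi / K2) * z ^ 2 - di * z) z := by
    intro z _
    have h2 : HasDerivAt (fun z : ℝ => z^2) (2 * z) z := by simpa using hasDerivAt_pow 2 z
    have h3 : HasDerivAt (fun z : ℝ => z^3) (3 * z^2) z := by
      simpa using hasDerivAt_pow 3 z
    have := (((h2.const_mul bi).div_const 2).add
      ((h3.const_mul (bi / K2)).div_const 3)).sub ((h2.const_mul di).div_const 2)
    exact this.congr_deriv (by ring)
  have hint : IntervalIntegrable (fun z => bi * z + (bi / K2) * z ^ 2 - di * z)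
      MeasureTheory.volume (0:ℝ) (-a) := by
    apply Continuous.intervalIntegrable; continuity
  rw [GRed, intervalIntegral.integral_congr hcong,
    intervalIntegral.integral_eq_sub_of_hasDerivAt key hint]
  have hK2' : K2 ≠ 0 := ne_of_gt hK2
  field_simp
  ring

lemma GRed_pos_indep (b1 b2 b3 d1 d2 d3 K1 K2 c : ℝ) (hc : 0 ≤ c) :
    GRed b1 d1 b2 d2 K1 K2 c = GRed b1 d1 b3 d3 K1 K2 c := by
  apply intervalIntegral.integral_congr
  intro z hz
  rw [Set.uIcc_of_le hc] at hz
  have hz0 : 0 ≤ z := hz.1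
  simp [gRed, max_eq_right (neg_nonpos.mpr hz0)]

lemma GRed_neg_self (b1 d1 bi di K1 K2 : ℝ) (hK2 : 0 < K2) (hbi : 0 < bi)
    (hbd : di < bi) :
    GRed b1 d1 bi di K1 K2 (-(K2 * (1 - di / bi)))
      = K2 ^ 2 / 6 * ((bi - di) ^ 3 / bi ^ 2) := by
  have ha : (0:ℝ) ≤ K2 * (1 - di / bi) := by
    have : 0 < 1 - di / bi := by
      rw [sub_pos, div_lt_one hbi]; exact hbd
    positivity
  rw [GRed_neg b1 d1 bi di K1 K2 _ hK2 ha]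
  have hbi' : bi ≠ 0 := ne_of_gt hbi
  have hK2' : K2 ≠ 0 := ne_of_gt hK2
  field_simp
  ring

lemma gamma_lt (b1 b2 b3 d1 d2 d3 K1 K2 : ℝ)
    (hb1 : 0 < b1) (hb2 : 0 < b2) (hb3 : 0 < b3)
    (hK1 : 0 < K1) (hK2 : 0 < K2)
    (hbd1 : d1 < b1) (hbd2 : d2 < b2) (hbd3 : d3 < b3)
    (hd2 : 0 < d2) (hb23 : b3 < b2) (hd23 : d2 < d3) :
    γRed b1 d1 b2 d2 K1 K2 < γRed b1 d1 b3 d3 K1 K2 := by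
  have hc : (0:ℝ) ≤ K1 * (1 - d1 / b1) := by
    have : 0 < 1 - d1 / b1 := by rw [sub_pos, div_lt_one hb1]; exact hbd1
    positivity
  unfold γRed
  rw [GRed_pos_indep b1 b2 b3 d1 d2 d3 K1 K2 _ hc,
    GRed_neg_self b1 d1 b2 d2 K1 K2 hK2 hb2 hbd2,
    GRed_neg_self b1 d1 b3 d3 K1 K2 hK2 hb3 hbd3]
  have hkey : (b3 - d3) ^ 3 / b3 ^ 2 < (b2 - d2) ^ 3 / b2 ^ 2 := by
    have hc3 : (0:ℝ) < (b3 - d3) / b3 := div_pos (by linarith) hb3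
    have hc23 : (b3 - d3) / b3 < (b2 - d2) / b2 := by
      rw [div_lt_div_iff₀ hb3 hb2]; nlinarith
    have h2 : b3 * ((b3 - d3) / b3) ^ 3 < b2 * ((b2 - d2) / b2) ^ 3 := by
      apply mul_lt_mul'' hb23 (pow_lt_pow_left₀ hc23 hc3.le (by norm_num)) hb3.le
      positivity
    have e3 : b3 * ((b3 - d3) / b3) ^ 3 = (b3 - d3) ^ 3 / b3 ^ 2 := by
      field_simp
    have e2 : b2 * ((b2 - d2) / b2) ^ 3 = (b2 - d2) ^ 3 / b2 ^ 2 := by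
      field_simp
    linarith [e3 ▸ e2 ▸ h2]
  have hK : (0:ℝ) < K2 ^ 2 / 6 := by positivity
  nlinarith [mul_lt_mul_of_pos_left hkey hK]

/-- under `b1 > d1`, `b2 > d2`, `b3 > d3`, `b2 > b3`, `d2 < d3`, one has
`g_{12}^F < g_{13}^F` on `(-K2^F, 0)`, `g_{12}^U < g_{13}^U` on `(-K2^U, 0)`, and
`γ_{12}^F < γ_{13}^F`, `γ_{12}^U < γ_{13}^U`. -/
theorem stmt19 (b1 b2 b3 d1 d2 d3 K1F K1U K2F K2U : ℝ)
    (hb1 : 0 < b1) (hb2 : 0 < b2) (hb3 : 0 < b3)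
    (hd1 : 0 < d1) (hd2 : 0 < d2) (hd3 : 0 < d3)
    (hK1F : 0 < K1F) (hK1U : 0 < K1U) (hK2F : 0 < K2F) (hK2U : 0 < K2U)
    (hbd1 : d1 < b1) (hbd2 : d2 < b2) (hbd3 : d3 < b3)
    (hb23 : b3 < b2) (hd23 : d2 < d3) :
    (∀ w ∈ Set.Ioo (-K2F) (0:ℝ),
      gRed b1 d1 b2 d2 K1F K2F w < gRed b1 d1 b3 d3 K1F K2F w) ∧
    (∀ w ∈ Set.Ioo (-K2U) (0:ℝ),
      gRed b1 d1 b2 d2 K1U K2U w < gRed b1 d1 b3 d3 K1U K2U w) ∧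
    γRed b1 d1 b2 d2 K1F K2F < γRed b1 d1 b3 d3 K1F K2F ∧
    γRed b1 d1 b2 d2 K1U K2U < γRed b1 d1 b3 d3 K1U K2U := by
  exact ⟨gRed_pt b1 b2 b3 d1 d2 d3 K1F K2F hK2F hb23 hd23,
    gRed_pt b1 b2 b3 d1 d2 d3 K1U K2U hK2U hb23 hd23,
    gamma_lt b1 b2 b3 d1 d2 d3 K1F K2F hb1 hb2 hb3 hK1F hK2F hbd1 hbd2 hbd3 hd2 hb23 hd23,
    gamma_lt b1 b2 b3 d1 d2 d3 K1U K2U hb1 hb2 hb3 hK1U hK2U hbd1 hbd2 hbd3 hd2 hb23 hd23⟩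
end
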